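/- arXiv:2109.09370 — 4 statements merged into one kernel-verified Lean document; each statement's English description precedes it below -/
import Mathlib

section
/- Let m ≥ 2, let τ ∈ S_m be cluster-free, and suppose that the ratios |S_{n+1}(τ)|/|S_n(τ)| converge as n → ∞ to a limit L > 0. Let {k_n} be any sequence with 1 ≤ k_n ≤ n-l+1. Then lim_{n→∞} |A^{(n)}_{l;k_n} ∩ S_n(τ)| / |S_n(τ)| = l!/L^{l-1} if 2 ≤ l < m, and lim_{n→∞} |A^{(n)}_{l;k_n} ∩ S_n(τ)| / |S_n(τ)| = (m! - 1)/L^{m-1} if l = m. (Here one uses that |S_l(τ)| = l! when l < m and |S_m(τ)| = m! - 1.) -/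
open Filter

def Contains {n m : ℕ} (σ : Fin n → Fin n) (τ : Fin m → Fin m) : Prop :=
  ∃ f : Fin m → Fin n, StrictMono f ∧ ∀ j k : Fin m, σ (f j) < σ (f k) ↔ τ j < τ k

def Avoids {n m : ℕ} (σ : Fin n → Fin n) (τ : Fin m → Fin m) : Prop :=
  ¬ Contains σ τ

def AvoidSet (n : ℕ) {m : ℕ} (τ : Equiv.Perm (Fin m)) : Set (Equiv.Perm (Fin n)) :=
  {σ : Equiv.Perm (Fin n) | Avoids ⇑σ ⇑τ}

def ClusterAt {n : ℕ} (l k a : ℕ) (σ : Equiv.Perm (Fin n)) : Prop :=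
  (Finset.univ.filter fun i : Fin n => a ≤ (i : ℕ) + 1 ∧ (i : ℕ) + 1 < a + l).image
      (fun i => (σ i : ℕ) + 1) = Finset.Ico k (k + l)

def ClusterEvent (n l k : ℕ) : Set (Equiv.Perm (Fin n)) :=
  {σ : Equiv.Perm (Fin n) | ∃ a : ℕ, 1 ≤ a ∧ a ≤ n - l + 1 ∧ ClusterAt l k a σ}

def ClusterFree {m : ℕ} (τ : Equiv.Perm (Fin m)) : Prop :=
  ∀ l a k : ℕ, 2 ≤ l → l ≤ m - 1 → 1 ≤ a → a + l ≤ m + 1 → ¬ ClusterAt l k a τ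

def ContainsTightly12 {m : ℕ} (τ : Equiv.Perm (Fin m)) : Prop :=
  ∃ i j : Fin m, (j : ℕ) = (i : ℕ) + 1 ∧ (τ j : ℕ) = (τ i : ℕ) + 1

def ContainsTightly21 {m : ℕ} (τ : Equiv.Perm (Fin m)) : Prop :=
  ∃ i j : Fin m, (j : ℕ) = (i : ℕ) + 1 ∧ (τ i : ℕ) = (τ j : ℕ) + 1

def perm123 : Equiv.Perm (Fin 3) := Equiv.refl (Fin 3)

def perm321 : Equiv.Perm (Fin 3) :=
  ⟨![2, 1, 0], ![2, 1, 0], by intro x; fin_cases x <;> rfl, by intro x; fin_cases x <;> rfl⟩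

def p2413 : Equiv.Perm (Fin 4) :=
  ⟨![1, 3, 0, 2], ![2, 0, 3, 1], by intro x; fin_cases x <;> rfl, by intro x; fin_cases x <;> rfl⟩

def p3142 : Equiv.Perm (Fin 4) :=
  ⟨![2, 0, 3, 1], ![1, 3, 0, 2], by intro x; fin_cases x <;> rfl, by intro x; fin_cases x <;> rfl⟩

def SepSet (n : ℕ) : Set (Equiv.Perm (Fin n)) :=
  {σ : Equiv.Perm (Fin n) | Avoids ⇑σ ⇑p2413 ∧ Avoids ⇑σ ⇑p3142}

/-!
If `σ` has a cluster of length `l` with values `[k, k + l)` at positions `[a, a + l)`, it is the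
inflation of a permutation `σ'` of size `n - l + 1` (with `σ' a = k`) by a pattern `β` of size `l`,
and `(β, σ') ↦ σ` is a bijection `S_l × S_{n-l+1} → A_{l;k}`. An occurrence of a cluster-free `τ`
in `σ` meets the cluster in a set of entries that is an interval both in positions and in values,
so it meets it in at most one entry (and then `σ'` contains `τ`) or lies inside it (and then `β`
contains `τ`). Hence `|A_{l;k} ∩ S_n(τ)| = |S_l(τ)| |S_{n-l+1}(τ)|`, and the ratio hypothesis
gives `|S_{n-l+1}(τ)| / |S_n(τ)| → L^{-(l-1)}`.
-/
open Topology

section Limits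

variable {𝕜 : Type*} [NormedField 𝕜] {a : ℕ → 𝕜} {L : 𝕜}

lemma tendsto_div_add_of_tendsto_div_succ (hL : L ≠ 0)
    (h : Tendsto (fun n => a (n + 1) / a n) atTop (𝓝 L)) (d : ℕ) :
    Tendsto (fun n => a (n + d) / a n) atTop (𝓝 (L ^ d)) := by
  have hne : ∀ᶠ n in atTop, a n ≠ 0 :=
    (h.eventually_ne hL).mono fun n hn h0 => hn (by rw [h0, div_zero])
  induction d with
  | zero => exact tendsto_const_nhds.congr' (hne.mono fun n hn => by simp [hn])
  | succ d ih =>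
    rw [pow_succ']
    refine ((h.comp (tendsto_add_atTop_nat d)).mul ih).congr' ?_
    filter_upwards [(tendsto_add_atTop_nat d).eventually hne] with n hn
    simp only [Function.comp_apply, ← add_assoc]
    exact div_mul_div_cancel₀ hn

lemma tendsto_div_sub_of_tendsto_div_succ (hL : L ≠ 0)
    (h : Tendsto (fun n => a (n + 1) / a n) atTop (𝓝 L)) (d : ℕ) :
    Tendsto (fun n => a (n - d) / a n) atTop (𝓝 (L ^ d)⁻¹) := by
  refine (((tendsto_div_add_of_tendsto_div_succ hL h d).comp (tendsto_sub_atTop_nat d)).inv₀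
    (pow_ne_zero d hL)).congr' ?_
  filter_upwards [eventually_ge_atTop d] with n hn
  simp [Nat.sub_add_cancel hn]

end Limits

namespace PermCluster

section Window

def collapse (x l v : ℕ) : ℕ := if v < x then v else if v < x + l then x else v - (l - 1)

def expand (x l v : ℕ) : ℕ := if v ≤ x then v else v + (l - 1)

variable {x l u v : ℕ}

lemma collapse_lt_collapse_iff (hl : 1 ≤ l)
    (h : ¬((x ≤ u ∧ u < x + l) ∧ (x ≤ v ∧ v < x + l))) :
    collapse x l u < collapse x l v ↔ u < v := by
  unfold collapse; split_ifs <;> omega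

lemma collapse_eq_collapse_iff (hl : 1 ≤ l)
    (h : ¬((x ≤ u ∧ u < x + l) ∧ (x ≤ v ∧ v < x + l))) :
    collapse x l u = collapse x l v ↔ u = v := by
  unfold collapse; split_ifs <;> omega

lemma collapse_eq_iff (hl : 1 ≤ l) : collapse x l v = x ↔ x ≤ v ∧ v < x + l := by
  unfold collapse; split_ifs <;> omega

lemma collapse_lt {n : ℕ} (hv : v < n) (hx : x + l ≤ n) : collapse x l v < n - l + 1 := by
  unfold collapse; split_ifs <;> omega

lemma strictMono_expand : StrictMono (expand x l) := by
  intro u v h; unfold expand; split_ifs <;> omega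

lemma expand_self : expand x l x = x := by simp [expand]

lemma expand_mem_iff (hl : 1 ≤ l) : (x ≤ expand x l v ∧ expand x l v < x + l) ↔ v = x := by
  unfold expand; split_ifs <;> omega

lemma expand_lt {n : ℕ} (hl : 1 ≤ l) (hln : l ≤ n) (hv : v < n - l + 1) : expand x l v < n := by
  unfold expand; split_ifs <;> omega

lemma collapse_expand (hl : 1 ≤ l) : collapse x l (expand x l v) = v := by
  unfold collapse expand; split_ifs <;> omega

lemma expand_collapse (h : ¬(x ≤ v ∧ v < x + l)) : expand x l (collapse x l v) = v := by
  unfold collapse expand; split_ifs <;> omega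

end Window

section NatFun

variable {n : ℕ}

-- Permutations of `Fin n` are handled as functions `ℕ → ℕ`: `natFun` extends by the identity, and
-- `ofNatFun n f` is the junk value `1` unless `f` maps `[0, n)` injectively into itself.
def natFun (σ : Equiv.Perm (Fin n)) (p : ℕ) : ℕ := if h : p < n then σ ⟨p, h⟩ else p

@[simp]
lemma natFun_coe (σ : Equiv.Perm (Fin n)) (i : Fin n) : natFun σ i = σ i := by
  simp [natFun]

lemma natFun_lt (σ : Equiv.Perm (Fin n)) {p : ℕ} (hp : p < n) : natFun σ p < n := by
  simp [natFun, hp]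

lemma natFun_inj (σ : Equiv.Perm (Fin n)) {p q : ℕ} (hp : p < n) (hq : q < n)
    (h : natFun σ p = natFun σ q) : p = q := by
  simp only [natFun, hp, hq, dite_true] at h
  exact congrArg Fin.val (σ.injective (Fin.ext h))

noncomputable def ofNatFun (n : ℕ) (f : ℕ → ℕ) : Equiv.Perm (Fin n) :=
  if h : (∀ p < n, f p < n) ∧ ∀ p < n, ∀ q < n, f p = f q → p = q then
    Equiv.ofBijective (fun i => ⟨f i, h.1 i i.2⟩)
      (Finite.injective_iff_bijective.1
        (fun i j hij => Fin.ext (h.2 i i.2 j j.2 (congrArg Fin.val hij))))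
  else 1

lemma ofNatFun_apply {f : ℕ → ℕ} (hlt : ∀ p < n, f p < n)
    (hinj : ∀ p < n, ∀ q < n, f p = f q → p = q) (i : Fin n) :
    (ofNatFun n f i : ℕ) = f i := by
  rw [ofNatFun, dif_pos ⟨hlt, hinj⟩]; rfl

end NatFun

section Block

variable {n : ℕ}

-- Positions and values are `0`-indexed here, whereas `ClusterAt` and `ClusterEvent` count from `1`.
def IsBlock (σ : Equiv.Perm (Fin n)) (a k l : ℕ) : Prop :=
  ∀ i : Fin n, (a ≤ i ∧ (i : ℕ) < a + l) ↔ (k ≤ σ i ∧ (σ i : ℕ) < k + l)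

variable {σ : Equiv.Perm (Fin n)} {a k l : ℕ}

lemma clusterAt_iff_isBlock (hk : k + l ≤ n) :
    ClusterAt l (k + 1) (a + 1) σ ↔ IsBlock σ a k l := by
  unfold ClusterAt
  constructor
  · intro h i
    have hi := Finset.ext_iff.1 h ((σ i : ℕ) + 1)
    simp only [Finset.mem_image, Finset.mem_filter, Finset.mem_univ, true_and,
      Finset.mem_Ico] at hi
    refine ⟨fun hw => by have := hi.1 ⟨i, by omega, rfl⟩; omega, fun hv => ?_⟩
    obtain ⟨j, hj, hji⟩ := hi.2 (by omega)
    obtain rfl : j = i := σ.injective (Fin.ext (by omega))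
    omega
  · intro h
    ext v
    simp only [Finset.mem_image, Finset.mem_filter, Finset.mem_univ, true_and, Finset.mem_Ico]
    refine ⟨fun ⟨i, hi, hiv⟩ => by have := (h i).1 (by omega); omega, fun hv => ?_⟩
    refine ⟨σ.symm ⟨v - 1, by omega⟩, ?_, by simp only [Equiv.apply_symm_apply]; omega⟩
    have := (h (σ.symm ⟨v - 1, by omega⟩)).2 (by simp only [Equiv.apply_symm_apply]; omega)
    omega

lemma IsBlock.mem_iff (h : IsBlock σ a k l) {p : ℕ} (hp : p < n) :
    (a ≤ p ∧ p < a + l) ↔ (k ≤ natFun σ p ∧ natFun σ p < k + l) := by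
  simpa [natFun, hp] using h ⟨p, hp⟩

lemma IsBlock.unique {a' : ℕ} (h : IsBlock σ a k l) (h' : IsBlock σ a' k l) (hl : 1 ≤ l)
    (ha : a + l ≤ n) (ha' : a' + l ≤ n) : a = a' := by
  have h₁ := (h.mem_iff (p := a) (by omega)).1 (by omega)
  have h₂ := (h'.mem_iff (p := a') (by omega)).1 (by omega)
  have h₃ := (h'.mem_iff (p := a) (by omega)).2 h₁
  have h₄ := (h.mem_iff (p := a') (by omega)).2 h₂
  omega

end Block

section Deflate

variable {n : ℕ} {σ : Equiv.Perm (Fin n)} {a k l : ℕ}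

noncomputable def blockPattern (σ : Equiv.Perm (Fin n)) (a k l : ℕ) : Equiv.Perm (Fin l) :=
  ofNatFun l fun i => natFun σ (a + i) - k

noncomputable def deflate (σ : Equiv.Perm (Fin n)) (a k l : ℕ) : Equiv.Perm (Fin (n - l + 1)) :=
  ofNatFun (n - l + 1) fun i => collapse k l (natFun σ (expand a l i))

lemma IsBlock.add_natFun_blockPattern (h : IsBlock σ a k l) (ha : a + l ≤ n) {i : ℕ}
    (hi : i < l) : k + natFun (blockPattern σ a k l) i = natFun σ (a + i) := by
  have hw (i : ℕ) (hi : i < l) := (h.mem_iff (p := a + i) (by omega)).1 (by omega)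
  have hlt (i : ℕ) (hi : i < l) : natFun σ (a + i) - k < l := by have := hw i hi; omega
  have hinj (i : ℕ) (hi : i < l) (j : ℕ) (hj : j < l)
      (hij : natFun σ (a + i) - k = natFun σ (a + j) - k) : i = j := by
    have := natFun_inj σ (p := a + i) (q := a + j) (by omega) (by omega)
      (by have := hw i hi; have := hw j hj; omega)
    omega
  have hb : natFun (blockPattern σ a k l) i = natFun σ (a + i) - k := by
    simpa [natFun, hi, blockPattern] using ofNatFun_apply hlt hinj ⟨i, hi⟩
  have := hw i hi
  omega

lemma IsBlock.deflate_apply (h : IsBlock σ a k l) (hl : 1 ≤ l) (ha : a + l ≤ n)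
    (hk : k + l ≤ n) (i : Fin (n - l + 1)) :
    (deflate σ a k l i : ℕ) = collapse k l (natFun σ (expand a l i)) := by
  refine ofNatFun_apply (fun i hi => collapse_lt (natFun_lt σ (expand_lt hl (by omega) hi)) hk)
    (fun i hi j hj hij => ?_) i
  have hi' := expand_lt (x := a) hl (by omega) hi
  have hj' := expand_lt (x := a) hl (by omega) hj
  by_cases hw : (k ≤ natFun σ (expand a l i) ∧ natFun σ (expand a l i) < k + l) ∧
      (k ≤ natFun σ (expand a l j) ∧ natFun σ (expand a l j) < k + l)
  · rw [← h.mem_iff hi', expand_mem_iff hl] at hw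
    rw [← h.mem_iff hj', expand_mem_iff hl] at hw
    omega
  · exact strictMono_expand.injective
      (natFun_inj σ hi' hj' ((collapse_eq_collapse_iff hl hw).1 hij))

lemma IsBlock.natFun_deflate_collapse (h : IsBlock σ a k l) (hl : 1 ≤ l) (ha : a + l ≤ n)
    (hk : k + l ≤ n) {p : ℕ} (hp : p < n) :
    natFun (deflate σ a k l) (collapse a l p) = collapse k l (natFun σ p) := by
  have hc : collapse a l p < n - l + 1 := collapse_lt hp ha
  rw [show natFun (deflate σ a k l) (collapse a l p) = deflate σ a k l ⟨_, hc⟩ by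
      simp [natFun, hc], h.deflate_apply hl ha hk]
  dsimp only
  by_cases hw : a ≤ p ∧ p < a + l
  · have hwa : a ≤ a ∧ a < a + l := by omega
    rw [(collapse_eq_iff hl).2 hw, expand_self, (collapse_eq_iff hl).2 ((h.mem_iff hp).1 hw),
      (collapse_eq_iff hl).2 ((h.mem_iff (by omega)).1 hwa)]
  · rw [expand_collapse hw]

lemma IsBlock.natFun_deflate_self (h : IsBlock σ a k l) (hl : 1 ≤ l) (ha : a + l ≤ n)
    (hk : k + l ≤ n) : natFun (deflate σ a k l) a = k := by
  have hw : a ≤ a ∧ a < a + l := by omega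
  have := h.natFun_deflate_collapse hl ha hk (p := a) (by omega)
  rwa [(collapse_eq_iff hl).2 hw, (collapse_eq_iff hl).2 ((h.mem_iff (by omega)).1 hw)] at this

end Deflate

section Inflate

variable {n l n' : ℕ} (β : Equiv.Perm (Fin l)) (σ' : Equiv.Perm (Fin n')) (a k : ℕ)

def inflateFun (p : ℕ) : ℕ :=
  if a ≤ p ∧ p < a + l then k + natFun β (p - a) else expand k l (natFun σ' (collapse a l p))

noncomputable def inflate (n : ℕ) (σ' : Equiv.Perm (Fin (n - l + 1))) : Equiv.Perm (Fin n) :=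
  ofNatFun n (inflateFun β σ' a k)

variable {β σ' a k}

lemma inflateFun_mem_iff (hl : 1 ≤ l) (ha : a < n') (hs : natFun σ' a = k) {p : ℕ}
    (hp : collapse a l p < n') :
    (k ≤ inflateFun β σ' a k p ∧ inflateFun β σ' a k p < k + l) ↔ (a ≤ p ∧ p < a + l) := by
  unfold inflateFun
  split_ifs with hw
  · have := natFun_lt β (p := p - a) (by omega)
    omega
  · rw [expand_mem_iff hl, ← hs]
    refine iff_of_false (fun he => hw ?_) hw
    rw [← collapse_eq_iff hl]
    exact natFun_inj σ' hp ha he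

variable {σ' : Equiv.Perm (Fin (n - l + 1))}

lemma inflateFun_lt (hl : 1 ≤ l) (hln : l ≤ n) (ha : a + l ≤ n) (hk : k + l ≤ n) {p : ℕ}
    (hp : p < n) : inflateFun β σ' a k p < n := by
  unfold inflateFun
  split_ifs with hw
  · have := natFun_lt β (p := p - a) (by omega)
    omega
  · exact expand_lt hl hln (natFun_lt σ' (collapse_lt hp ha))

lemma inflateFun_inj (hl : 1 ≤ l) (ha : a + l ≤ n) (hs : natFun σ' a = k) {p q : ℕ}
    (hp : p < n) (hq : q < n) (h : inflateFun β σ' a k p = inflateFun β σ' a k q) : p = q := by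
  have hiff : (a ≤ p ∧ p < a + l) ↔ (a ≤ q ∧ q < a + l) := by
    rw [← inflateFun_mem_iff (β := β) hl (by omega) hs (collapse_lt hp ha), h,
      inflateFun_mem_iff hl (by omega) hs (collapse_lt hq ha)]
  by_cases hwp : a ≤ p ∧ p < a + l
  · simp only [inflateFun, hwp, hiff.1 hwp, and_self, if_true] at h
    have := natFun_inj β (p := p - a) (q := q - a) (by omega) (by omega) (by omega)
    omega
  · simp only [inflateFun, hwp, mt hiff.2 hwp, if_false] at h
    have := natFun_inj σ' (collapse_lt hp ha) (collapse_lt hq ha)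
      (strictMono_expand.injective h)
    exact (collapse_eq_collapse_iff hl fun hw => hwp hw.1).1 this

lemma natFun_inflate (hl : 1 ≤ l) (hln : l ≤ n) (ha : a + l ≤ n) (hk : k + l ≤ n)
    (hs : natFun σ' a = k) {p : ℕ} (hp : p < n) :
    natFun (inflate β a k n σ') p = inflateFun β σ' a k p := by
  simpa [natFun, hp, inflate] using ofNatFun_apply (fun p hp => inflateFun_lt hl hln ha hk hp)
    (fun p hp q hq => inflateFun_inj hl ha hs hp hq) ⟨p, hp⟩

lemma isBlock_inflate (hl : 1 ≤ l) (hln : l ≤ n) (ha : a + l ≤ n) (hk : k + l ≤ n)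
    (hs : natFun σ' a = k) : IsBlock (inflate β a k n σ') a k l := fun i => by
  rw [← natFun_coe, natFun_inflate hl hln ha hk hs i.2,
    inflateFun_mem_iff hl (by omega) hs (collapse_lt i.2 ha)]

lemma blockPattern_inflate (hl : 1 ≤ l) (hln : l ≤ n) (ha : a + l ≤ n) (hk : k + l ≤ n)
    (hs : natFun σ' a = k) : blockPattern (inflate β a k n σ') a k l = β := by
  ext i
  have := (isBlock_inflate (β := β) hl hln ha hk hs).add_natFun_blockPattern ha i.2
  rw [natFun_inflate hl hln ha hk hs (by omega), inflateFun, if_pos (by omega),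
    add_tsub_cancel_left] at this
  simpa using this

lemma deflate_inflate (hl : 1 ≤ l) (hln : l ≤ n) (ha : a + l ≤ n) (hk : k + l ≤ n)
    (hs : natFun σ' a = k) : deflate (inflate β a k n σ') a k l = σ' := by
  ext i
  rw [(isBlock_inflate hl hln ha hk hs).deflate_apply hl ha hk,
    natFun_inflate hl hln ha hk hs (expand_lt hl hln i.2), inflateFun]
  split_ifs with hw
  · have hia : (i : ℕ) = a := (expand_mem_iff hl).1 hw
    have := natFun_lt β (p := expand a l i - a) (by omega)
    rw [(collapse_eq_iff hl).2 (by omega), ← hs, ← hia, natFun_coe]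
  · rw [collapse_expand hl, collapse_expand hl, natFun_coe]

end Inflate

lemma IsBlock.inflate_blockPattern_deflate {n a k l : ℕ} {σ : Equiv.Perm (Fin n)}
    (h : IsBlock σ a k l) (hl : 1 ≤ l) (ha : a + l ≤ n) (hk : k + l ≤ n) :
    inflate (blockPattern σ a k l) a k n (deflate σ a k l) = σ := by
  ext p
  rw [← natFun_coe, natFun_inflate hl (by omega) ha hk (h.natFun_deflate_self hl ha hk) p.2,
    inflateFun]
  split_ifs with hw
  · rw [h.add_natFun_blockPattern ha (by omega), show a + (p - a) = p by omega, natFun_coe]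
  · rw [h.natFun_deflate_collapse hl ha hk p.2, expand_collapse, natFun_coe]
    rwa [← h.mem_iff p.2]

section Pattern

lemma _root_.Set.OrdConnected.exists_eq_window {m : ℕ} {s : Set (Fin m)} (hs : s.OrdConnected)
    (hne : s.Nonempty) :
    ∃ a, a + s.ncard ≤ m ∧ ∀ i : Fin m, i ∈ s ↔ a ≤ (i : ℕ) ∧ (i : ℕ) < a + s.ncard := by
  have : NeZero m := ⟨fun h => by subst h; exact hne.some.elim0⟩
  have heq := (hne.ordConnected_iff_of_bdd').1 hs
  set lo := sInf s
  set hi := sSup s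
  have hle : lo ≤ hi := Set.nonempty_Icc.1 (heq ▸ hne)
  have hcard : s.ncard = hi + 1 - lo := by
    rw [heq, Set.ncard_eq_toFinset_card', Set.toFinset_Icc, Fin.card_Icc]
  refine ⟨lo, by rw [Fin.le_def] at hle; omega, fun i => ?_⟩
  rw [hcard, Fin.le_def] at *
  conv_lhs => rw [heq]
  rw [Set.mem_Icc, Fin.le_def, Fin.le_def]
  omega

variable {m : ℕ} {τ : Equiv.Perm (Fin m)}

lemma _root_.ClusterFree.subsingleton_or_eq_univ (hτ : ClusterFree τ) {s : Set (Fin m)}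
    (hs : s.OrdConnected) (hτs : (τ '' s).OrdConnected) : s.Subsingleton ∨ s = Set.univ := by
  rcases s.eq_empty_or_nonempty with rfl | hne
  · exact Or.inl Set.subsingleton_empty
  by_contra! hns
  obtain ⟨a, ha, has⟩ := hs.exists_eq_window hne
  obtain ⟨k, hk, hks⟩ := hτs.exists_eq_window (hne.image τ)
  rw [Set.ncard_image_of_injective _ τ.injective] at hk hks
  have h2 : 1 < s.ncard := Set.one_lt_ncard_iff_nontrivial.2 hns.1
  have hlt : s.ncard < m := by
    simpa using Set.ncard_lt_ncard (Set.ssubset_univ_iff.2 hns.2)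
  refine hτ s.ncard (a + 1) (k + 1) h2 (by omega) (by omega) (by omega)
    ((clusterAt_iff_isBlock hk).2 fun i => ?_)
  rw [← has, ← hks, τ.injective.mem_set_image]

variable {n a k l : ℕ} {σ : Equiv.Perm (Fin n)}

lemma contains_of_contains_blockPattern (h : IsBlock σ a k l) (ha : a + l ≤ n)
    (hc : Contains (blockPattern σ a k l) τ) : Contains σ τ := by
  obtain ⟨f, hf, hfτ⟩ := hc
  refine ⟨fun j => ⟨a + f j, by omega⟩, fun i j hij => ?_, fun i j => ?_⟩
  · exact Nat.add_lt_add_left (hf hij) a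
  · have hi := h.add_natFun_blockPattern ha (f i).2
    have hj := h.add_natFun_blockPattern ha (f j).2
    rw [← hfτ, Fin.lt_def, Fin.lt_def]
    simp only [← natFun_coe]
    omega

lemma contains_of_contains_deflate (h : IsBlock σ a k l) (hl : 1 ≤ l) (ha : a + l ≤ n)
    (hk : k + l ≤ n) (hc : Contains (deflate σ a k l) τ) : Contains σ τ := by
  obtain ⟨f, hf, hfτ⟩ := hc
  refine ⟨fun j => ⟨expand a l (f j), expand_lt hl (by omega) (f j).2⟩,
    fun i j hij => strictMono_expand (hf hij), fun i j => ?_⟩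
  rw [← hfτ, Fin.lt_def, Fin.lt_def, h.deflate_apply hl ha hk, h.deflate_apply hl ha hk]
  rcases eq_or_ne i j with rfl | hij
  · simp
  simp only [← natFun_coe]
  rw [collapse_lt_collapse_iff hl]
  rw [← h.mem_iff (expand_lt hl (by omega) (f i).2),
    ← h.mem_iff (expand_lt hl (by omega) (f j).2), expand_mem_iff hl, expand_mem_iff hl]
  exact fun hfij => hij (hf.injective (Fin.ext (hfij.1.trans hfij.2.symm)))

lemma contains_deflate_of_subsingleton (h : IsBlock σ a k l) (hl : 1 ≤ l) (ha : a + l ≤ n)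
    (hk : k + l ≤ n) {f : Fin m → Fin n} (hf : StrictMono f)
    (hfτ : ∀ i j, σ (f i) < σ (f j) ↔ τ i < τ j)
    (hsub : {j | a ≤ (f j : ℕ) ∧ (f j : ℕ) < a + l}.Subsingleton) :
    Contains (deflate σ a k l) τ := by
  have hnot {i j : Fin m} (hij : i ≠ j) :
      ¬((a ≤ (f i : ℕ) ∧ (f i : ℕ) < a + l) ∧ (a ≤ (f j : ℕ) ∧ (f j : ℕ) < a + l)) :=
    fun hw => hij (hsub hw.1 hw.2)
  refine ⟨fun j => ⟨collapse a l (f j), collapse_lt (f j).2 ha⟩,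
    fun i j hij => (collapse_lt_collapse_iff hl (hnot hij.ne)).2 (hf hij), fun i j => ?_⟩
  rw [← hfτ, Fin.lt_def, Fin.lt_def]
  rcases eq_or_ne i j with rfl | hij
  · simp
  simp only [← natFun_coe]
  rw [h.natFun_deflate_collapse hl ha hk (f i).2, h.natFun_deflate_collapse hl ha hk (f j).2,
    collapse_lt_collapse_iff hl]
  rw [← h.mem_iff (f i).2, ← h.mem_iff (f j).2]
  exact hnot hij

lemma contains_blockPattern_of_forall_mem (h : IsBlock σ a k l) (ha : a + l ≤ n)
    {f : Fin m → Fin n} (hf : StrictMono f) (hfτ : ∀ i j, σ (f i) < σ (f j) ↔ τ i < τ j)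
    (hall : ∀ j, a ≤ (f j : ℕ) ∧ (f j : ℕ) < a + l) :
    Contains (blockPattern σ a k l) τ := by
  refine ⟨fun j => ⟨f j - a, by have := hall j; omega⟩, fun i j hij => ?_, fun i j => ?_⟩
  · have := hall i
    exact Nat.sub_lt_sub_right this.1 (hf hij)
  · have e (j : Fin m) := h.add_natFun_blockPattern ha (i := f j - a) (by have := hall j; omega)
    rw [← hfτ, Fin.lt_def, Fin.lt_def]
    simp only [← natFun_coe]
    have ei := e i
    have ej := e j
    rw [Nat.add_sub_cancel' (hall i).1] at ei
    rw [Nat.add_sub_cancel' (hall j).1] at ej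
    omega

lemma contains_blockPattern_or_deflate (hτ : ClusterFree τ) (h : IsBlock σ a k l)
    (hl : 1 ≤ l) (ha : a + l ≤ n) (hk : k + l ≤ n) (hc : Contains σ τ) :
    Contains (blockPattern σ a k l) τ ∨ Contains (deflate σ a k l) τ := by
  obtain ⟨f, hf, hfτ⟩ := hc
  set s : Set (Fin m) := {j | a ≤ (f j : ℕ) ∧ (f j : ℕ) < a + l}
  have hs : s.OrdConnected :=
    Set.ordConnected_Ico.preimage_mono (f := fun j => (f j : ℕ)) fun i j hij => hf.monotone hij
  have hτs : (τ '' s).OrdConnected := by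
    have hmono : Monotone fun v => (σ (f (τ.symm v)) : ℕ) := fun u v huv =>
      le_of_not_gt fun hlt => by
        simpa [huv.not_gt] using (hfτ _ _).1 (Fin.lt_def.2 hlt)
    convert (Set.ordConnected_Ico (a := k) (b := k + l)).preimage_mono hmono
    ext v
    rw [τ.image_eq_preimage_symm]
    exact h _
  rcases hτ.subsingleton_or_eq_univ hs hτs with hsub | huniv
  · exact Or.inr (contains_deflate_of_subsingleton h hl ha hk hf hfτ hsub)
  · exact Or.inl (contains_blockPattern_of_forall_mem h ha hf hfτ
      fun j => (huniv ▸ Set.mem_univ j : j ∈ s))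

end Pattern

section Count

variable {m : ℕ} {τ : Equiv.Perm (Fin m)} {n l : ℕ}

lemma inflate_mem (hτ : ClusterFree τ) (hl : 1 ≤ l) (hln : l ≤ n) {a k : ℕ} (ha : a + l ≤ n)
    (hk : k + l ≤ n) {β : Equiv.Perm (Fin l)} {σ' : Equiv.Perm (Fin (n - l + 1))}
    (hs : natFun σ' a = k) (hβ : β ∈ AvoidSet l τ) (hσ' : σ' ∈ AvoidSet (n - l + 1) τ) :
    inflate β a k n σ' ∈ ClusterEvent n l (k + 1) ∩ AvoidSet n τ := by
  have hB := isBlock_inflate (β := β) hl hln ha hk hs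
  refine ⟨⟨a + 1, by omega, by omega, (clusterAt_iff_isBlock hk).2 hB⟩, fun hc => ?_⟩
  rcases contains_blockPattern_or_deflate hτ hB hl ha hk hc with hc | hc
  · exact hβ (by rwa [blockPattern_inflate hl hln ha hk hs] at hc)
  · exact hσ' (by rwa [deflate_inflate hl hln ha hk hs] at hc)

noncomputable def inflateAt (n : ℕ) (k : Fin (n - l + 1))
    (x : Equiv.Perm (Fin l) × Equiv.Perm (Fin (n - l + 1))) : Equiv.Perm (Fin n) :=
  inflate x.1 (x.2.symm k) k n x.2

lemma injective_inflateAt (hl : 1 ≤ l) (hln : l ≤ n) (k : Fin (n - l + 1)) :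
    Function.Injective (inflateAt n k) := by
  rintro ⟨β₁, σ₁⟩ ⟨β₂, σ₂⟩ h
  have hk : (k : ℕ) + l ≤ n := by omega
  have ha₁ : (σ₁.symm k : ℕ) + l ≤ n := by omega
  have ha₂ : (σ₂.symm k : ℕ) + l ≤ n := by omega
  have hs₁ : natFun σ₁ (σ₁.symm k) = k := by simp
  have hs₂ : natFun σ₂ (σ₂.symm k) = k := by simp
  have hB₁ := isBlock_inflate (β := β₁) hl hln ha₁ hk hs₁
  have hB₂ := isBlock_inflate (β := β₂) hl hln ha₂ hk hs₂
  simp only [inflateAt] at h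
  rw [h] at hB₁
  have ha := hB₁.unique hB₂ hl ha₁ ha₂
  have hβ := blockPattern_inflate (β := β₁) hl hln ha₁ hk hs₁
  have hσ := deflate_inflate (β := β₁) hl hln ha₁ hk hs₁
  rw [h, ha, blockPattern_inflate hl hln ha₂ hk hs₂] at hβ
  rw [h, ha, deflate_inflate hl hln ha₂ hk hs₂] at hσ
  rw [hβ, hσ]

lemma image_inflateAt (hτ : ClusterFree τ) (hl : 1 ≤ l) (hln : l ≤ n) (k : Fin (n - l + 1)) :
    inflateAt n k '' (AvoidSet l τ ×ˢ AvoidSet (n - l + 1) τ) =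
      ClusterEvent n l (k + 1) ∩ AvoidSet n τ := by
  have hk : (k : ℕ) + l ≤ n := by omega
  ext σ
  constructor
  · rintro ⟨⟨β, σ'⟩, ⟨hβ, hσ'⟩, rfl⟩
    exact inflate_mem hτ hl hln (by omega) hk (by simp) hβ hσ'
  · rintro ⟨⟨a, ha₁, ha₂, hca⟩, hσ⟩
    obtain ⟨a, rfl⟩ : ∃ a₀, a = a₀ + 1 := ⟨a - 1, by omega⟩
    have ha : a + l ≤ n := by omega
    have hB := (clusterAt_iff_isBlock hk).1 hca
    refine ⟨(blockPattern σ a k l, deflate σ a k l),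
      ⟨fun hc => hσ (contains_of_contains_blockPattern hB ha hc),
        fun hc => hσ (contains_of_contains_deflate hB hl ha hk hc)⟩, ?_⟩
    have hsymm : (deflate σ a k l).symm k = ⟨a, by omega⟩ := by
      rw [Equiv.symm_apply_eq, Fin.ext_iff, ← natFun_coe]
      exact (hB.natFun_deflate_self hl ha hk).symm
    simp only [inflateAt, hsymm]
    exact hB.inflate_blockPattern_deflate hl ha hk

lemma ncard_clusterEvent_inter_avoidSet (hτ : ClusterFree τ) (hl : 1 ≤ l) (hln : l ≤ n)
    {k : ℕ} (hk₁ : 1 ≤ k) (hk₂ : k ≤ n - l + 1) :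
    (ClusterEvent n l k ∩ AvoidSet n τ).ncard =
      (AvoidSet l τ).ncard * (AvoidSet (n - l + 1) τ).ncard := by
  obtain ⟨k, rfl⟩ : ∃ k₀, k = k₀ + 1 := ⟨k - 1, by omega⟩
  rw [← image_inflateAt hτ hl hln ⟨k, by omega⟩,
    Set.ncard_image_of_injective _ (injective_inflateAt hl hln _), Set.ncard_prod]

end Count

section SmallCounts

variable {m : ℕ}

lemma contains_iff_eq (σ τ : Equiv.Perm (Fin m)) : Contains σ τ ↔ σ = τ := by
  refine ⟨fun ⟨f, hf, hfτ⟩ => ?_, fun h => ⟨id, strictMono_id, fun _ _ => by rw [h]; rfl⟩⟩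
  obtain rfl : f = id := hf.eq_id
  have hmono : StrictMono (σ ∘ τ.symm) := fun u v huv => by
    simpa using (hfτ (τ.symm u) (τ.symm v)).2 (by simpa using huv)
  exact Equiv.ext fun x => by simpa using congrFun hmono.eq_id (τ x)

lemma avoidSet_eq_univ {l : ℕ} (τ : Equiv.Perm (Fin m)) (hlm : l < m) :
    AvoidSet l τ = Set.univ := by
  refine Set.eq_univ_of_forall fun σ ⟨f, hf, _⟩ => ?_
  have := Fintype.card_le_of_injective f hf.injective
  simp only [Fintype.card_fin] at this
  omega

lemma ncard_avoidSet_of_lt {l : ℕ} (τ : Equiv.Perm (Fin m)) (hlm : l < m) :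
    (AvoidSet l τ).ncard = l.factorial := by
  rw [avoidSet_eq_univ τ hlm, Set.ncard_univ, Nat.card_eq_fintype_card, Fintype.card_perm,
    Fintype.card_fin]

lemma ncard_avoidSet_self (τ : Equiv.Perm (Fin m)) :
    (AvoidSet m τ).ncard = m.factorial - 1 := by
  have : AvoidSet m τ = Set.univ \ {τ} := by
    ext σ
    simp [AvoidSet, Avoids, contains_iff_eq]
  rw [this, Set.ncard_sdiff_singleton_of_mem (Set.mem_univ τ), Set.ncard_univ,
    Nat.card_eq_fintype_card, Fintype.card_perm, Fintype.card_fin]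

end SmallCounts

lemma tendsto_ncard_clusterEvent_inter_avoidSet_div {m : ℕ} {τ : Equiv.Perm (Fin m)}
    (hτ : ClusterFree τ) {L : ℝ} (hL : L ≠ 0)
    (hconv : Tendsto (fun n => ((AvoidSet (n + 1) τ).ncard : ℝ) / (AvoidSet n τ).ncard) atTop
      (𝓝 L))
    {l : ℕ} (hl : 1 ≤ l) (k : ℕ → ℕ) (hk : ∀ n, 1 ≤ k n ∧ k n ≤ n - l + 1) :
    Tendsto (fun n => ((ClusterEvent n l (k n) ∩ AvoidSet n τ).ncard : ℝ) / (AvoidSet n τ).ncard)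
      atTop (𝓝 ((AvoidSet l τ).ncard / L ^ (l - 1))) := by
  have hsub := (tendsto_div_sub_of_tendsto_div_succ
    (a := fun n => ((AvoidSet n τ).ncard : ℝ)) hL hconv (l - 1)).const_mul
    ((AvoidSet l τ).ncard : ℝ)
  rw [← div_eq_mul_inv] at hsub
  refine hsub.congr' ?_
  filter_upwards [eventually_ge_atTop l] with n hn
  rw [ncard_clusterEvent_inter_avoidSet hτ hl hn (hk n).1 (hk n).2,
    show n - l + 1 = n - (l - 1) by omega]
  push_cast
  ring

end PermCluster

/-- for cluster-free `τ`, the limit equals `l!/L^{l-1}` when `2 ≤ l < m`,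
and `(m!-1)/L^{m-1}` when `l = m`. -/
theorem avoid_cluster_limit_clusterFree_values (m : ℕ) (hm : 2 ≤ m) (τ : Equiv.Perm (Fin m))
    (hτ : ClusterFree τ) (L : ℝ) (hL : 0 < L)
    (hconv : Filter.Tendsto
      (fun n : ℕ => ((AvoidSet (n + 1) τ).ncard : ℝ) / ((AvoidSet n τ).ncard : ℝ))
      Filter.atTop (nhds L))
    (l : ℕ) (k : ℕ → ℕ) (hk : ∀ n : ℕ, 1 ≤ k n ∧ k n ≤ n - l + 1) :
    (2 ≤ l → l < m →
      Filter.Tendsto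
        (fun n : ℕ => ((ClusterEvent n l (k n) ∩ AvoidSet n τ).ncard : ℝ) /
          ((AvoidSet n τ).ncard : ℝ)) Filter.atTop
        (nhds ((Nat.factorial l : ℝ) / L ^ (l - 1)))) ∧
    (l = m →
      Filter.Tendsto
        (fun n : ℕ => ((ClusterEvent n l (k n) ∩ AvoidSet n τ).ncard : ℝ) /
          ((AvoidSet n τ).ncard : ℝ)) Filter.atTop
        (nhds (((Nat.factorial m : ℝ) - 1) / L ^ (m - 1)))) := by
  have hlim (hl : 1 ≤ l) :=
    PermCluster.tendsto_ncard_clusterEvent_inter_avoidSet_div hτ hL.ne' hconv hl k hk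
  refine ⟨fun hl hlm => ?_, fun hlm => ?_⟩
  · simpa [PermCluster.ncard_avoidSet_of_lt τ hlm] using hlim (by omega)
  · subst hlm
    simpa [PermCluster.ncard_avoidSet_self, Nat.cast_sub l.factorial_pos] using hlim (by omega)
end

section
/- For all n ≥ 3, all l with 2 ≤ l ≤ n-1, and all k with 1 ≤ k ≤ n-l+1, one has |A^{(n)}_{l;k} ∩ S_n^sep| = |S_{n-l+1}^sep| · |S_l^sep|; equivalently, under the uniform probability measure P_n^sep on S_n^sep, P_n^sep(A^{(n)}_{l;k}) = |S_{n-l+1}^sep|·|S_l^sep| / |S_n^sep|. -/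
open Filter

/-!
A permutation lies in `A_{l;k}` exactly when its values `k, …, k+l-1` occupy consecutive
positions, i.e. when it is the inflation `σ[1, …, 1, π, 1, …, 1]` of the entry of value `k` of a
permutation `σ` of size `n-l+1` by a permutation `π` of size `l`; this inflation is a bijection.
Both `σ` and `π` are patterns of the inflation. Conversely, since `2413` and `3142` are simple, an
occurrence of either in an inflation meets the inflated block in at most one entry or lies inside
it, so it yields an occurrence in `σ` or in `π`. Hence the inflation is separable iff `σ` and `π`
are.
-/

open Equiv

namespace Equiv.Perm

variable {n : ℕ}

-- Extended by the identity beyond `n`, so that it is injective on all of `ℕ`.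
def natExt (σ : Perm (Fin n)) (i : ℕ) : ℕ := if h : i < n then σ ⟨i, h⟩ else i

@[simp]
theorem natExt_coe (σ : Perm (Fin n)) (i : Fin n) : σ.natExt i = σ i := by
  simp [natExt]

theorem natExt_lt_iff (σ : Perm (Fin n)) {i : ℕ} : σ.natExt i < n ↔ i < n := by
  unfold natExt
  split_ifs with h <;> simp [h]

theorem natExt_injective (σ : Perm (Fin n)) : Function.Injective σ.natExt := by
  intro i j h
  have hij : i < n ↔ j < n := by rw [← σ.natExt_lt_iff, h, σ.natExt_lt_iff]
  unfold natExt at h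
  split_ifs at h with hi hj hj
  · simpa using σ.injective (Fin.ext h)
  · exact absurd (hij.1 hi) hj
  · exact absurd (hij.2 hj) hi
  · exact h

noncomputable def ofInjOn (f : ℕ → ℕ) (hf : ∀ i < n, f i < n) (hinj : Set.InjOn f (Set.Iio n)) :
    Perm (Fin n) :=
  Equiv.ofBijective (fun i => ⟨f i, hf i i.2⟩)
    (Finite.injective_iff_bijective.mp fun i j h => Fin.ext (hinj i.2 j.2 (congrArg Fin.val h)))

theorem natExt_ofInjOn {f : ℕ → ℕ} (hf : ∀ i < n, f i < n) (hinj : Set.InjOn f (Set.Iio n))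
    {i : ℕ} (hi : i < n) : (ofInjOn f hf hinj).natExt i = f i := by
  simp [natExt, hi, ofInjOn]

end Equiv.Perm

theorem Contains.trans {n m s : ℕ} {σ : Fin n → Fin n} {ρ : Fin m → Fin m} {τ : Fin s → Fin s}
    (hσρ : Contains σ ρ) (hρτ : Contains ρ τ) : Contains σ τ := by
  obtain ⟨f, hf, hfρ⟩ := hσρ
  obtain ⟨g, hg, hgτ⟩ := hρτ
  exact ⟨f ∘ g, hf.comp hg, fun j k => (hfρ (g j) (g k)).trans (hgτ j k)⟩

theorem contains_of_natExt_lt_iff {n m : ℕ} {σ : Perm (Fin n)} {ρ : Perm (Fin m)}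
    (g : Fin m → ℕ) (hg : StrictMono g) (hgn : ∀ i, g i < n)
    (h : ∀ i j, σ.natExt (g i) < σ.natExt (g j) ↔ ρ i < ρ j) : Contains ⇑σ ⇑ρ :=
  ⟨fun i => ⟨g i, hgn i⟩, fun _ _ hij => hg hij, fun i j => by
    rw [Fin.lt_def, ← Perm.natExt_coe, ← Perm.natExt_coe]
    exact h i j⟩

-- Every interval of `τ` (a set `B` of consecutive positions carrying consecutive values) is
-- trivial.
def IsSimple {s : ℕ} (τ : Perm (Fin s)) : Prop :=
  ∀ B : Finset (Fin s), (∀ i ∈ B, ∀ j ∈ B, ∀ x, i < x → x < j → x ∈ B) →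
    (∀ i ∈ B, ∀ j ∈ B, ∀ x, τ i < τ x → τ x < τ j → x ∈ B) → B.card ≤ 1 ∨ B = Finset.univ

set_option synthInstance.maxSize 512 in
theorem isSimple_p2413 : IsSimple p2413 := by
  unfold IsSimple
  decide

set_option synthInstance.maxSize 512 in
theorem isSimple_p3142 : IsSimple p3142 := by
  unfold IsSimple
  decide

-- The (0-based) positions `a, …, a + L` carry the values `k, …, k + L`.
def IsBlock {n : ℕ} (σ : Perm (Fin n)) (a k L : ℕ) : Prop :=
  ∀ i : Fin n, a ≤ i ∧ (i : ℕ) ≤ a + L ↔ k ≤ σ i ∧ (σ i : ℕ) ≤ k + L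

theorem IsBlock.natExt_iff {n a k L : ℕ} {σ : Perm (Fin n)} (h : IsBlock σ a k L) {i : ℕ}
    (hi : i < n) : a ≤ i ∧ i ≤ a + L ↔ k ≤ σ.natExt i ∧ σ.natExt i ≤ k + L := by
  have := h ⟨i, hi⟩
  rwa [← Perm.natExt_coe] at this

theorem IsBlock.eq {n a a' k L : ℕ} {σ : Perm (Fin n)} (h : IsBlock σ a k L)
    (h' : IsBlock σ a' k L) (ha : a < n) (ha' : a' < n) : a = a' := by
  have h₁ := (h'.natExt_iff ha).2 ((h.natExt_iff ha).1 (by omega))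
  have h₂ := (h.natExt_iff ha').2 ((h'.natExt_iff ha').1 (by omega))
  omega

theorem clusterAt_iff_isBlock {n a k L : ℕ} {σ : Perm (Fin n)} (hk : k + L < n) :
    ClusterAt (L + 1) (k + 1) (a + 1) σ ↔ IsBlock σ a k L := by
  simp only [ClusterAt, IsBlock, Finset.ext_iff, Finset.mem_image, Finset.mem_filter,
    Finset.mem_univ, true_and, Finset.mem_Ico]
  constructor
  · intro h i
    constructor
    · intro hi
      have := (h (σ i + 1)).1 ⟨i, by omega, rfl⟩
      omega
    · intro hv
      obtain ⟨j, hj, hji⟩ := (h (σ i + 1)).2 (by omega)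
      obtain rfl : j = i := σ.injective (Fin.ext (by omega))
      omega
  · intro h v
    constructor
    · rintro ⟨i, hi, rfl⟩
      have := (h i).1 (by omega)
      omega
    · intro hv
      refine ⟨σ.symm ⟨v - 1, by omega⟩, ?_, by simp; omega⟩
      have := (h (σ.symm ⟨v - 1, by omega⟩)).2 (by simp; omega)
      omega

theorem clusterEvent_eq {m L : ℕ} (k : Fin m) :
    ClusterEvent (m + L) (L + 1) (k + 1) = {σ | ∃ a : Fin m, IsBlock σ a k L} := by
  have := k.2
  ext σ
  constructor
  · rintro ⟨a, ha₁, ha₂, h⟩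
    obtain ⟨a, rfl⟩ : ∃ a', a = a' + 1 := ⟨a - 1, by omega⟩
    exact ⟨⟨a, by omega⟩, (clusterAt_iff_isBlock (by omega)).1 h⟩
  · rintro ⟨a, h⟩
    exact ⟨a + 1, by omega, by omega, (clusterAt_iff_isBlock (by omega)).2 h⟩

section ExpandCollapse

-- `expand c L` opens a gap of length `L` right after `c`; `collapse c L` undoes it, squashing
-- `c, …, c + L` onto `c`.
def expand (c L x : ℕ) : ℕ := if x ≤ c then x else x + L

def collapse (c L x : ℕ) : ℕ := if x ≤ c then x else if x ≤ c + L then c else x - L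

variable {c L x y : ℕ}

theorem expand_lt_expand : expand c L x < expand c L y ↔ x < y := by
  unfold expand; split_ifs <;> omega

theorem expand_mem_iff : c ≤ expand c L x ∧ expand c L x ≤ c + L ↔ x = c := by
  unfold expand; split_ifs <;> omega

theorem collapse_expand : collapse c L (expand c L x) = x := by
  unfold collapse expand; split_ifs <;> omega

theorem expand_collapse (hx : ¬(c ≤ x ∧ x ≤ c + L)) : expand c L (collapse c L x) = x := by
  unfold collapse expand; split_ifs <;> omega

theorem collapse_eq_iff : collapse c L x = c ↔ c ≤ x ∧ x ≤ c + L := by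
  unfold collapse; split_ifs <;> omega

theorem collapse_lt_collapse (h : ¬((c ≤ x ∧ x ≤ c + L) ∧ (c ≤ y ∧ y ≤ c + L))) :
    collapse c L x < collapse c L y ↔ x < y := by
  unfold collapse; split_ifs <;> omega

theorem expand_lt {m : ℕ} (hx : x < m) : expand c L x < m + L := by
  unfold expand; split_ifs <;> omega

theorem collapse_lt {m : ℕ} (hc : c < m) (hx : x < m + L) : collapse c L x < m := by
  unfold collapse; split_ifs <;> omega

end ExpandCollapse

section Inflation

variable {m L : ℕ}

-- The inflation `σ[1, …, 1, π, 1, …, 1]` of the entry at position `a`, as a function on `ℕ`.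
def inflNat (σ : Perm (Fin m)) (a : ℕ) (π : Perm (Fin (L + 1))) (i : ℕ) : ℕ :=
  if a ≤ i ∧ i ≤ a + L then σ.natExt a + π.natExt (i - a)
  else expand (σ.natExt a) L (σ.natExt (collapse a L i))

section InflNat

variable (σ : Perm (Fin m)) (a : ℕ) (π : Perm (Fin (L + 1))) {i j : ℕ}

theorem inflNat_of_mem (hi : a ≤ i ∧ i ≤ a + L) :
    inflNat σ a π i = σ.natExt a + π.natExt (i - a) :=
  if_pos hi

theorem inflNat_of_not_mem (hi : ¬(a ≤ i ∧ i ≤ a + L)) :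
    inflNat σ a π i = expand (σ.natExt a) L (σ.natExt (collapse a L i)) :=
  if_neg hi

theorem natExt_collapse_ne (hi : ¬(a ≤ i ∧ i ≤ a + L)) :
    σ.natExt (collapse a L i) ≠ σ.natExt a :=
  fun h => hi (collapse_eq_iff.1 (σ.natExt_injective h))

theorem natExt_sub_le (hi : a ≤ i ∧ i ≤ a + L) : π.natExt (i - a) ≤ L :=
  Nat.le_of_lt_succ (π.natExt_lt_iff.2 (by omega))

theorem inflNat_mem_iff :
    σ.natExt a ≤ inflNat σ a π i ∧ inflNat σ a π i ≤ σ.natExt a + L ↔ a ≤ i ∧ i ≤ a + L := by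
  by_cases hi : a ≤ i ∧ i ≤ a + L
  · rw [inflNat_of_mem σ a π hi]
    have := natExt_sub_le a π hi
    omega
  · rw [inflNat_of_not_mem σ a π hi, expand_mem_iff]
    exact iff_of_false (natExt_collapse_ne σ a hi) hi

theorem inflNat_lt_iff_of_mem (hi : a ≤ i ∧ i ≤ a + L) (hj : a ≤ j ∧ j ≤ a + L) :
    inflNat σ a π i < inflNat σ a π j ↔ π.natExt (i - a) < π.natExt (j - a) := by
  rw [inflNat_of_mem σ a π hi, inflNat_of_mem σ a π hj]
  omega

theorem inflNat_lt_iff_of_not_mem (h : ¬((a ≤ i ∧ i ≤ a + L) ∧ (a ≤ j ∧ j ≤ a + L))) :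
    inflNat σ a π i < inflNat σ a π j ↔
      σ.natExt (collapse a L i) < σ.natExt (collapse a L j) := by
  by_cases hi : a ≤ i ∧ i ≤ a + L <;> by_cases hj : a ≤ j ∧ j ≤ a + L
  · exact absurd ⟨hi, hj⟩ h
  · rw [inflNat_of_mem σ a π hi, inflNat_of_not_mem σ a π hj, collapse_eq_iff.2 hi]
    have := natExt_sub_le a π hi
    have := natExt_collapse_ne σ a hj
    unfold expand; split_ifs <;> omega
  · rw [inflNat_of_not_mem σ a π hi, inflNat_of_mem σ a π hj, collapse_eq_iff.2 hj]
    have := natExt_sub_le a π hj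
    have := natExt_collapse_ne σ a hi
    unfold expand; split_ifs <;> omega
  · rw [inflNat_of_not_mem σ a π hi, inflNat_of_not_mem σ a π hj, expand_lt_expand]

theorem inflNat_injective : Function.Injective (inflNat σ a π) := by
  intro i j hij
  by_cases h : (a ≤ i ∧ i ≤ a + L) ∧ (a ≤ j ∧ j ≤ a + L)
  · rw [inflNat_of_mem σ a π h.1, inflNat_of_mem σ a π h.2, Nat.add_left_cancel_iff] at hij
    have := π.natExt_injective hij
    omega
  · have hlt := inflNat_lt_iff_of_not_mem σ a π h
    have hgt := inflNat_lt_iff_of_not_mem σ a π (i := j) (j := i) (by tauto)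
    have hσ := σ.natExt_injective (show σ.natExt (collapse a L i) = σ.natExt (collapse a L j) by
      omega)
    have := collapse_lt_collapse (c := a) (L := L) h
    have := collapse_lt_collapse (c := a) (L := L) (x := j) (y := i) (by tauto)
    omega

theorem inflNat_lt (ha : a < m) (hi : i < m + L) : inflNat σ a π i < m + L := by
  by_cases h : a ≤ i ∧ i ≤ a + L
  · rw [inflNat_of_mem σ a π h]
    have := natExt_sub_le a π h
    have := σ.natExt_lt_iff.2 ha
    omega
  · rw [inflNat_of_not_mem σ a π h]
    exact expand_lt (σ.natExt_lt_iff.2 (collapse_lt ha hi))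

end InflNat

noncomputable def inflate (σ : Perm (Fin m)) (a : Fin m) (π : Perm (Fin (L + 1))) :
    Perm (Fin (m + L)) :=
  Perm.ofInjOn (inflNat σ a π) (fun _ hi => inflNat_lt σ a π a.2 hi)
    (inflNat_injective σ a π).injOn

section Inflate

variable (σ : Perm (Fin m)) (a : Fin m) (π : Perm (Fin (L + 1)))

theorem natExt_inflate {i : ℕ} (hi : i < m + L) :
    (inflate σ a π).natExt i = inflNat σ a π i :=
  Perm.natExt_ofInjOn _ _ hi

theorem isBlock_inflate : IsBlock (inflate σ a π) a (σ a) L := fun i => by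
  rw [← Perm.natExt_coe, ← Perm.natExt_coe, natExt_inflate σ a π i.2, inflNat_mem_iff]

theorem contains_inflate_left : Contains ⇑(inflate σ a π) ⇑σ := by
  refine contains_of_natExt_lt_iff (fun p => expand a L p) (fun p q hpq => expand_lt_expand.2 hpq)
    (fun p => expand_lt p.2) fun p q => ?_
  rw [natExt_inflate σ a π (expand_lt p.2), natExt_inflate σ a π (expand_lt q.2)]
  obtain rfl | hpq := eq_or_ne p q
  · simp
  have hout : ¬((a ≤ expand a L p ∧ expand a L p ≤ a + L) ∧
      (a ≤ expand a L q ∧ expand a L q ≤ a + L)) := by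
    rw [expand_mem_iff, expand_mem_iff]
    exact fun h => hpq (Fin.ext (h.1.trans h.2.symm))
  rw [inflNat_lt_iff_of_not_mem σ a π hout, collapse_expand, collapse_expand, Perm.natExt_coe,
    Perm.natExt_coe, Fin.lt_def]

theorem contains_inflate_right : Contains ⇑(inflate σ a π) ⇑π := by
  refine contains_of_natExt_lt_iff (fun q => a + q) (fun p q hpq => by simpa using hpq)
    (fun q => by omega) fun p q => ?_
  rw [natExt_inflate σ a π (by omega), natExt_inflate σ a π (by omega),
    inflNat_lt_iff_of_mem σ a π (by omega) (by omega), Nat.add_sub_cancel_left,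
    Nat.add_sub_cancel_left, Perm.natExt_coe, Perm.natExt_coe, Fin.lt_def]

theorem avoids_inflate {s : ℕ} {τ : Perm (Fin s)} (hτ : IsSimple τ) (hσ : Avoids ⇑σ ⇑τ)
    (hπ : Avoids ⇑π ⇑τ) : Avoids ⇑(inflate σ a π) ⇑τ := by
  classical
  rintro ⟨f, hf, hfτ⟩
  have hcmp : ∀ i j, inflNat σ a π (f i) < inflNat σ a π (f j) ↔ τ i < τ j := fun i j => by
    rw [← hfτ, Fin.lt_def, ← natExt_inflate σ a π (f i).2, ← natExt_inflate σ a π (f j).2,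
      Perm.natExt_coe, Perm.natExt_coe]
  let B := Finset.univ.filter fun j => a ≤ (f j : ℕ) ∧ (f j : ℕ) ≤ a + L
  have hB : ∀ j, j ∈ B ↔ a ≤ (f j : ℕ) ∧ (f j : ℕ) ≤ a + L := by simp [B]
  have hBpos : ∀ i ∈ B, ∀ j ∈ B, ∀ x, i < x → x < j → x ∈ B := by
    intro i hi j hj x hix hxj
    rw [hB] at *
    have := hf hix
    have := hf hxj
    rw [Fin.lt_def] at *
    omega
  have hBval : ∀ i ∈ B, ∀ j ∈ B, ∀ x, τ i < τ x → τ x < τ j → x ∈ B := by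
    intro i hi j hj x hix hxj
    rw [hB, ← inflNat_mem_iff σ a π] at *
    have := (hcmp i x).2 hix
    have := (hcmp x j).2 hxj
    omega
  rcases hτ B hBpos hBval with hcard | hBuniv
  · have hout : ∀ i j, i ≠ j → ¬((a ≤ (f i : ℕ) ∧ (f i : ℕ) ≤ a + L) ∧
        (a ≤ (f j : ℕ) ∧ (f j : ℕ) ≤ a + L)) := fun i j hij h =>
      hij (Finset.card_le_one.1 hcard i ((hB i).2 h.1) j ((hB j).2 h.2))
    refine hσ (contains_of_natExt_lt_iff (fun j => collapse a L (f j))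
      (fun i j hij => (collapse_lt_collapse (hout i j hij.ne)).2 (hf hij))
      (fun j => collapse_lt a.2 (f j).2) fun i j => ?_)
    obtain rfl | hij := eq_or_ne i j
    · simp
    rw [← hcmp, inflNat_lt_iff_of_not_mem σ a π (hout i j hij)]
  · have hin : ∀ j, a ≤ (f j : ℕ) ∧ (f j : ℕ) ≤ a + L := fun j =>
      (hB j).1 (hBuniv ▸ Finset.mem_univ j)
    refine hπ (contains_of_natExt_lt_iff (fun j => f j - a) (fun i j hij => ?_)
      (fun j => by have := hin j; omega) fun i j => ?_)
    · have := Fin.lt_def.1 (hf hij)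
      have := hin i
      show (f i : ℕ) - a < f j - a
      omega
    · rw [← hcmp, inflNat_lt_iff_of_mem σ a π (hin i) (hin j)]

theorem avoids_inflate_iff {s : ℕ} {τ : Perm (Fin s)} (hτ : IsSimple τ) :
    Avoids ⇑(inflate σ a π) ⇑τ ↔ Avoids ⇑σ ⇑τ ∧ Avoids ⇑π ⇑τ :=
  ⟨fun h => ⟨fun hσ => h ((contains_inflate_left σ a π).trans hσ),
    fun hπ => h ((contains_inflate_right σ a π).trans hπ)⟩,
    fun h => avoids_inflate σ a π hτ h.1 h.2⟩

theorem coe_apply_eq_collapse_inflate (p : Fin m) :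
    (σ p : ℕ) = collapse (σ a) L ((inflate σ a π).natExt (expand a L p)) := by
  rw [natExt_inflate σ a π (expand_lt p.2)]
  obtain rfl | hpa := eq_or_ne p a
  · have hmem : (p : ℕ) ≤ expand p L p ∧ expand p L p ≤ p + L := by unfold expand; simp
    rw [inflNat_of_mem σ p π hmem, Perm.natExt_coe, collapse_eq_iff.2]
    have := natExt_sub_le p π hmem
    omega
  · rw [inflNat_of_not_mem σ a π (expand_mem_iff.not.2 (Fin.val_ne_of_ne hpa))]
    simp only [collapse_expand, Perm.natExt_coe]

theorem coe_apply_eq_inflate_sub (q : Fin (L + 1)) :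
    (π q : ℕ) = (inflate σ a π).natExt (a + q) - σ a := by
  rw [natExt_inflate σ a π (by omega), inflNat_of_mem σ a π (by omega)]
  simp

end Inflate

noncomputable def inflateAtValue (k : Fin m) (x : Perm (Fin m) × Perm (Fin (L + 1))) :
    Perm (Fin (m + L)) :=
  inflate x.1 (x.1.symm k) x.2

theorem inflateAtValue_injective (k : Fin m) : Function.Injective (inflateAtValue (L := L) k) := by
  rintro ⟨σ₁, π₁⟩ ⟨σ₂, π₂⟩ h
  simp only [inflateAtValue] at h
  have hblk₁ := isBlock_inflate σ₁ (σ₁.symm k) π₁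
  have hblk₂ := isBlock_inflate σ₂ (σ₂.symm k) π₂
  rw [apply_symm_apply, h] at hblk₁
  rw [apply_symm_apply] at hblk₂
  have ha : σ₁.symm k = σ₂.symm k := Fin.ext (hblk₁.eq hblk₂ (by omega) (by omega))
  obtain rfl : σ₁ = σ₂ := Perm.ext fun p => Fin.ext <| by
    rw [coe_apply_eq_collapse_inflate σ₁ (σ₁.symm k) π₁,
      coe_apply_eq_collapse_inflate σ₂ (σ₂.symm k) π₂, apply_symm_apply, apply_symm_apply, h, ha]
  obtain rfl : π₁ = π₂ := Perm.ext fun q => Fin.ext <| by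
    rw [coe_apply_eq_inflate_sub σ₁ (σ₁.symm k) π₁, coe_apply_eq_inflate_sub σ₁ (σ₁.symm k) π₂, h]
  rfl

section Deflation

variable {σ : Perm (Fin (m + L))} {a k : Fin m}

theorem IsBlock.injOn_outer (h : IsBlock σ a k L) :
    Set.InjOn (fun p => collapse k L (σ.natExt (expand a L p))) (Set.Iio m) := by
  intro p (hp : p < m) p' (hp' : p' < m) hpp'
  by_contra hne
  have hmem : ∀ {p}, p < m →
      (k ≤ σ.natExt (expand a L p) ∧ σ.natExt (expand a L p) ≤ k + L ↔ p = a) := fun hp => by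
    rw [← h.natExt_iff (expand_lt hp), expand_mem_iff]
  have hout : ¬((k ≤ σ.natExt (expand a L p) ∧ σ.natExt (expand a L p) ≤ k + L) ∧
      (k ≤ σ.natExt (expand a L p') ∧ σ.natExt (expand a L p') ≤ k + L)) := fun hb =>
    hne (((hmem hp).1 hb.1).trans ((hmem hp').1 hb.2).symm)
  have h₁ := collapse_lt_collapse hout
  have h₂ := collapse_lt_collapse fun hb => hout ⟨hb.2, hb.1⟩
  have := σ.natExt_injective (show σ.natExt (expand a L p) = σ.natExt (expand a L p') by
    simp only at hpp'
    omega)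
  have := expand_lt_expand (c := a) (L := L) (x := p) (y := p')
  have := expand_lt_expand (c := a) (L := L) (x := p') (y := p)
  omega

theorem IsBlock.injOn_inner (h : IsBlock σ a k L) :
    Set.InjOn (fun q => σ.natExt (a + q) - k) (Set.Iio (L + 1)) := by
  intro q (hq : q < L + 1) q' (hq' : q' < L + 1) hqq'
  have := (h.natExt_iff (i := a + q) (by omega)).1 (by omega)
  have := (h.natExt_iff (i := a + q') (by omega)).1 (by omega)
  have := σ.natExt_injective (show σ.natExt (a + q) = σ.natExt (a + q') by
    simp only at hqq'
    omega)
  omega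

noncomputable def IsBlock.outer (h : IsBlock σ a k L) : Perm (Fin m) :=
  Perm.ofInjOn (fun p => collapse k L (σ.natExt (expand a L p)))
    (fun _ hp => collapse_lt k.2 (σ.natExt_lt_iff.2 (expand_lt hp))) h.injOn_outer

noncomputable def IsBlock.inner (h : IsBlock σ a k L) : Perm (Fin (L + 1)) :=
  Perm.ofInjOn (fun q => σ.natExt (a + q) - k)
    (fun q hq => by have := (h.natExt_iff (i := a + q) (by omega)).1 (by omega); omega)
    h.injOn_inner

theorem IsBlock.outer_apply (h : IsBlock σ a k L) : h.outer a = k := Fin.ext <| by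
  rw [← Perm.natExt_coe, IsBlock.outer, Perm.natExt_ofInjOn _ _ a.2]
  have hexp : expand a L a = a := if_pos le_rfl
  simp only [hexp]
  exact collapse_eq_iff.2 ((h.natExt_iff (by omega)).1 (by omega))

theorem IsBlock.inflate_outer_inner (h : IsBlock σ a k L) : inflate h.outer a h.inner = σ := by
  refine Equiv.ext fun i => Fin.ext ?_
  rw [← Perm.natExt_coe, ← Perm.natExt_coe, natExt_inflate _ _ _ i.2]
  by_cases hi : a ≤ (i : ℕ) ∧ (i : ℕ) ≤ a + L
  · have := (h.natExt_iff i.2).1 hi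
    rw [inflNat_of_mem _ _ _ hi, Perm.natExt_coe, h.outer_apply, IsBlock.inner,
      Perm.natExt_ofInjOn _ _ (by omega)]
    simp only [Nat.add_sub_cancel' hi.1]
    omega
  · rw [inflNat_of_not_mem _ _ _ hi, Perm.natExt_coe, h.outer_apply, IsBlock.outer,
      Perm.natExt_ofInjOn _ _ (collapse_lt a.2 i.2), expand_collapse hi,
      expand_collapse ((h.natExt_iff i.2).not.1 hi)]

end Deflation

theorem range_inflateAtValue (k : Fin m) :
    Set.range (inflateAtValue (L := L) k) = {σ | ∃ a : Fin m, IsBlock σ a k L} := by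
  ext σ
  constructor
  · rintro ⟨⟨σ', π⟩, rfl⟩
    exact ⟨σ'.symm k, by simpa [inflateAtValue] using isBlock_inflate σ' (σ'.symm k) π⟩
  · rintro ⟨a, h⟩
    have ha : h.outer.symm k = a := (Equiv.symm_apply_eq _).2 h.outer_apply.symm
    exact ⟨(h.outer, h.inner), by rw [inflateAtValue, ha, h.inflate_outer_inner]⟩

theorem inflateAtValue_preimage_sepSet (k : Fin m) :
    inflateAtValue (L := L) k ⁻¹' SepSet (m + L) = SepSet m ×ˢ SepSet (L + 1) := by
  ext ⟨σ, π⟩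
  simp only [Set.mem_preimage, Set.mem_prod, SepSet, Set.mem_ofPred_eq, inflateAtValue,
    avoids_inflate_iff _ _ _ isSimple_p2413, avoids_inflate_iff _ _ _ isSimple_p3142]
  tauto

end Inflation

theorem separable_cluster_exact_general (n : ℕ) (l : ℕ) (hl2 : 2 ≤ l) (hln : l ≤ n - 1)
    (k : ℕ) (hk1 : 1 ≤ k) (hk2 : k ≤ n - l + 1) :
    (ClusterEvent n l k ∩ SepSet n).ncard = (SepSet (n - l + 1)).ncard * (SepSet l).ncard ∧
    ((ClusterEvent n l k ∩ SepSet n).ncard : ℝ) / ((SepSet n).ncard : ℝ) =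
      (((SepSet (n - l + 1)).ncard * (SepSet l).ncard : ℕ) : ℝ) / ((SepSet n).ncard : ℝ) := by
  have hcount :
      (ClusterEvent n l k ∩ SepSet n).ncard = (SepSet (n - l + 1)).ncard * (SepSet l).ncard := by
    obtain ⟨L, rfl⟩ : ∃ L, l = L + 1 := ⟨l - 1, by omega⟩
    obtain ⟨m, rfl⟩ : ∃ m, n = m + L := ⟨n - L, by omega⟩
    obtain ⟨k, rfl⟩ : ∃ k' : Fin m, k = k' + 1 := ⟨⟨k - 1, by omega⟩, by simp; omega⟩
    rw [show m + L - (L + 1) + 1 = m by omega, clusterEvent_eq, ← range_inflateAtValue,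
      ← Set.image_preimage_eq_range_inter,
      Set.ncard_image_of_injective _ (inflateAtValue_injective _), inflateAtValue_preimage_sepSet,
      Set.ncard_prod]
  exact ⟨hcount, by rw [hcount]⟩

/-- exact count (and probability) for separable permutations. -/
theorem separable_cluster_exact (n : ℕ) (hn : 3 ≤ n) (l : ℕ) (hl2 : 2 ≤ l) (hln : l ≤ n - 1)
    (k : ℕ) (hk1 : 1 ≤ k) (hk2 : k ≤ n - l + 1) :
    (ClusterEvent n l k ∩ SepSet n).ncard = (SepSet (n - l + 1)).ncard * (SepSet l).ncard ∧
    ((ClusterEvent n l k ∩ SepSet n).ncard : ℝ) / ((SepSet n).ncard : ℝ) =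
      (((SepSet (n - l + 1)).ncard * (SepSet l).ncard : ℕ) : ℝ) / ((SepSet n).ncard : ℝ) :=
  separable_cluster_exact_general n l hl2 hln k hk1 hk2
end

section
/- Let τ ∈ S_m and η ∈ S_{m'} both be cluster-free permutations, and let S_n(τ,η) denote the set of permutations in S_n avoiding both τ and η. Then for all n ≥ 3, all l with 2 ≤ l ≤ n-1, and all k with 1 ≤ k ≤ n-l+1, one has |A^{(n)}_{l;k} ∩ S_n(τ,η)| = |S_{n-l+1}(τ,η)| · |S_l(τ,η)|; equivalently, the probability of A^{(n)}_{l;k} under the uniform measure on S_n(τ,η) equals |S_{n-l+1}(τ,η)|·|S_l(τ,η)| / |S_n(τ,η)|. -/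
open Filter

namespace ClusterProof

/-- value expansion map -/
def vex (l k0 v : ℕ) : ℕ := if v < k0 then v else v + (l-1)

lemma vex_lt {q l k0 v : ℕ} (hl : 1 ≤ l) (hv : v < q + 1) : vex l k0 v < q + l := by
  unfold vex; split <;> omega

lemma vex_lt_iff (l k0 : ℕ) (v v' : ℕ) : vex l k0 v < vex l k0 v' ↔ v < v' := by
  unfold vex; split_ifs <;> omega

lemma vex_inj {l k0 v v' : ℕ} (h : vex l k0 v = vex l k0 v') : v = v' := by
  unfold vex at h; split_ifs at h <;> omega

/-- vex of a value ≠ k0 is outside the block [k0, k0+l) -/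
lemma vex_not_block {l k0 v : ℕ} (hv : v ≠ k0) :
    vex l k0 v < k0 ∨ k0 + l ≤ vex l k0 v := by
  unfold vex; split <;> omega

/-- the underlying function of the expanded permutation -/
def efn (q l a0 k0 : ℕ) (hl : 1 ≤ l) (ha : a0 ≤ q) (hk : k0 ≤ q)
    (π : Equiv.Perm (Fin (q+1))) (ρ : Equiv.Perm (Fin l)) :
    Fin (q+l) → Fin (q+l) := fun i =>
  if h1 : (i:ℕ) < a0 then
    ⟨vex l k0 (π ⟨(i:ℕ), by omega⟩), vex_lt hl (π _).isLt⟩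
  else if h2 : (i:ℕ) < a0 + l then
    ⟨k0 + (ρ ⟨(i:ℕ) - a0, by omega⟩ : ℕ), by have := (ρ ⟨(i:ℕ) - a0, by omega⟩).isLt; omega⟩
  else
    ⟨vex l k0 (π ⟨(i:ℕ) - (l-1), by have := i.isLt; omega⟩), vex_lt hl (π _).isLt⟩

variable {q l a0 k0 : ℕ} {hl : 1 ≤ l} {ha : a0 ≤ q} {hk : k0 ≤ q}
  {π : Equiv.Perm (Fin (q+1))} {ρ : Equiv.Perm (Fin l)}

lemma efn_lo {i : Fin (q+l)} (h : (i:ℕ) < a0) :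
    (efn q l a0 k0 hl ha hk π ρ i : ℕ) = vex l k0 (π ⟨(i:ℕ), by omega⟩) := by
  unfold efn; rw [dif_pos h]

lemma efn_mid {i : Fin (q+l)} (h1 : a0 ≤ (i:ℕ)) (h2 : (i:ℕ) < a0 + l) :
    (efn q l a0 k0 hl ha hk π ρ i : ℕ) = k0 + (ρ ⟨(i:ℕ) - a0, by omega⟩ : ℕ) := by
  unfold efn; rw [dif_neg (by omega), dif_pos h2]

lemma efn_hi {i : Fin (q+l)} (h : a0 + l ≤ (i:ℕ)) :
    (efn q l a0 k0 hl ha hk π ρ i : ℕ) =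
      vex l k0 (π ⟨(i:ℕ) - (l-1), by have := i.isLt; omega⟩) := by
  unfold efn; rw [dif_neg (by omega), dif_neg (by omega)]

end ClusterProof

namespace ClusterProof
section
variable {q l a0 k0 : ℕ} (hl : 1 ≤ l) (ha : a0 ≤ q) (hk : k0 ≤ q)
  (π : Equiv.Perm (Fin (q+1))) (ρ : Equiv.Perm (Fin l))
  (hπ : π ⟨a0, by omega⟩ = ⟨k0, by omega⟩)

omit hl ρ in
include hπ in
/-- π j ≠ k0 for j ≠ a0 -/
lemma pi_ne {j : Fin (q+1)} (hj : (j:ℕ) ≠ a0) : ((π j : ℕ)) ≠ k0 := by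
  intro h
  have : π j = π ⟨a0, by omega⟩ := by rw [hπ]; exact Fin.ext h
  have := π.injective this
  apply hj; rw [this]

include hπ in
lemma efn_injective : Function.Injective (efn q l a0 k0 hl ha hk π ρ) := by
  intro i i' he
  have he' : (efn q l a0 k0 hl ha hk π ρ i : ℕ) = (efn q l a0 k0 hl ha hk π ρ i' : ℕ) :=
    congrArg Fin.val he
  apply Fin.ext
  rcases lt_or_ge (i:ℕ) a0 with h1 | h1 <;> rcases lt_or_ge (i':ℕ) a0 with h1' | h1'
  · -- lo lo
    rw [efn_lo h1, efn_lo h1'] at he'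
    exact Fin.mk.inj (π.injective (Fin.ext (vex_inj he')))
  · rcases lt_or_ge (i':ℕ) (a0+l) with h2' | h2'
    · -- lo mid : contradiction
      rw [efn_lo h1, efn_mid h1' h2'] at he'
      have hne := pi_ne (l := l) ha hk π hπ (j := ⟨(i:ℕ), by omega⟩) (by simpa using by omega)
      rcases vex_not_block (l := l) hne with hb | hb <;>
        · have := (ρ ⟨(i':ℕ) - a0, by omega⟩).isLt; omega
    · -- lo hi : π inj then omega contradiction
      rw [efn_lo h1, efn_hi h2'] at he'
      have h2 := Fin.mk.inj (π.injective (Fin.ext (vex_inj he')))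
      have := i'.isLt; omega
  · rcases lt_or_ge (i:ℕ) (a0+l) with h2 | h2
    · rw [efn_mid h1 h2, efn_lo h1'] at he'
      have hne := pi_ne (l := l) ha hk π hπ (j := ⟨(i':ℕ), by omega⟩) (by simpa using by omega)
      rcases vex_not_block (l := l) hne with hb | hb <;>
        · have := (ρ ⟨(i:ℕ) - a0, by omega⟩).isLt; omega
    · rw [efn_hi h2, efn_lo h1'] at he'
      have h2 := Fin.mk.inj (π.injective (Fin.ext (vex_inj he')))
      have := i.isLt; omega
  · rcases lt_or_ge (i:ℕ) (a0+l) with h2 | h2 <;> rcases lt_or_ge (i':ℕ) (a0+l) with h2' | h2'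
    · -- mid mid
      rw [efn_mid h1 h2, efn_mid h1' h2'] at he'
      have h3 : ρ ⟨(i:ℕ) - a0, by omega⟩ = ρ ⟨(i':ℕ) - a0, by omega⟩ := Fin.ext (by omega)
      have h4 := Fin.mk.inj (ρ.injective h3)
      omega
    · -- mid hi
      rw [efn_mid h1 h2, efn_hi h2'] at he'
      have hne := pi_ne (l := l) ha hk π hπ (j := ⟨(i':ℕ) - (l-1), by have := i'.isLt; omega⟩)
        (by simpa using by omega)
      rcases vex_not_block (l := l) hne with hb | hb <;>
        · have := (ρ ⟨(i:ℕ) - a0, by omega⟩).isLt; omega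
    · rw [efn_hi h2, efn_mid h1' h2'] at he'
      have hne := pi_ne (l := l) ha hk π hπ (j := ⟨(i:ℕ) - (l-1), by have := i.isLt; omega⟩)
        (by simpa using by omega)
      rcases vex_not_block (l := l) hne with hb | hb <;>
        · have := (ρ ⟨(i':ℕ) - a0, by omega⟩).isLt; omega
    · -- hi hi
      rw [efn_hi h2, efn_hi h2'] at he'
      have h3 := Fin.mk.inj (π.injective (Fin.ext (vex_inj he')))
      omega

end
end ClusterProof

namespace ClusterProof

def posex (a0 l p : ℕ) : ℕ := if p ≤ a0 then p else p + (l-1)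

lemma posex_lt_posex {a0 l p p' : ℕ} (h : p < p') : posex a0 l p < posex a0 l p' := by
  unfold posex; split_ifs <;> omega

lemma cmp_core (l k0 : ℕ) (v v' s s' : ℕ)
    (hv : (v = k0 ∧ k0 ≤ s ∧ s < k0 + l) ∨ (v ≠ k0 ∧ s = vex l k0 v))
    (hv' : (v' = k0 ∧ k0 ≤ s' ∧ s' < k0 + l) ∨ (v' ≠ k0 ∧ s' = vex l k0 v'))
    (hboth : ¬(v = k0 ∧ v' = k0)) : (s < s' ↔ v < v') := by
  unfold vex at hv hv'
  rcases hv with ⟨rfl, h⟩ | ⟨h1, rfl⟩ <;> rcases hv' with ⟨h2, h3⟩ | ⟨h2, rfl⟩ <;>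
    (try split_ifs) <;> omega

section
variable {q l a0 k0 : ℕ} (hl : 1 ≤ l) (ha : a0 ≤ q) (hk : k0 ≤ q)
  (π : Equiv.Perm (Fin (q+1))) (ρ : Equiv.Perm (Fin l))
  (hπ : π ⟨a0, by omega⟩ = ⟨k0, by omega⟩)

noncomputable def eperm : Equiv.Perm (Fin (q+l)) :=
  Equiv.ofBijective _
    ((Finite.injective_iff_bijective).mp (efn_injective hl ha hk π ρ hπ))

lemma eperm_apply (i : Fin (q+l)) :
    eperm hl ha hk π ρ hπ i = efn q l a0 k0 hl ha hk π ρ i := rfl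

include hπ in
lemma efn_block_iff (i : Fin (q+l)) :
    (k0 ≤ (efn q l a0 k0 hl ha hk π ρ i : ℕ) ∧ (efn q l a0 k0 hl ha hk π ρ i : ℕ) < k0 + l)
      ↔ (a0 ≤ (i:ℕ) ∧ (i:ℕ) < a0 + l) := by
  rcases lt_or_ge (i:ℕ) a0 with h1 | h1
  · rw [efn_lo h1]
    have hne := pi_ne (l := l) ha hk π hπ (j := ⟨(i:ℕ), by omega⟩) (by simp; omega)
    rcases vex_not_block (l := l) hne with hb | hb <;> omega
  rcases lt_or_ge (i:ℕ) (a0+l) with h2 | h2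
  · rw [efn_mid h1 h2]
    have := (ρ ⟨(i:ℕ) - a0, by omega⟩).isLt
    omega
  · rw [efn_hi h2]
    have hne := pi_ne (l := l) ha hk π hπ (j := ⟨(i:ℕ) - (l-1), by have := i.isLt; omega⟩)
      (by simp; omega)
    rcases vex_not_block (l := l) hne with hb | hb <;> omega

include hπ in
lemma eperm_block_iff (i : Fin (q+l)) :
    (k0 ≤ (eperm hl ha hk π ρ hπ i : ℕ) ∧ (eperm hl ha hk π ρ hπ i : ℕ) < k0 + l)
      ↔ (a0 ≤ (i:ℕ) ∧ (i:ℕ) < a0 + l) := efn_block_iff hl ha hk π ρ hπ i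

lemma efn_val_out (j : Fin (q+1)) (i : Fin (q+l))
    (hcase : ((i:ℕ) < a0 ∧ (j:ℕ) = (i:ℕ)) ∨ (a0 + l ≤ (i:ℕ) ∧ (j:ℕ) = (i:ℕ) - (l-1))) :
    (efn q l a0 k0 hl ha hk π ρ i : ℕ) = vex l k0 (π j) := by
  rcases hcase with ⟨h1, h2⟩ | ⟨h1, h2⟩
  · rw [efn_lo h1]; congr 1
    exact congrArg (fun x => ((π x : Fin (q+1)) : ℕ)) (Fin.ext h2.symm)
  · rw [efn_hi h1]; congr 1
    exact congrArg (fun x => ((π x : Fin (q+1)) : ℕ)) (Fin.ext h2.symm)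

include hπ in
lemma efn_posex_cmp (u u' : Fin (q+1)) :
    ((efn q l a0 k0 hl ha hk π ρ ⟨posex a0 l (u:ℕ), by unfold posex; have := u.isLt; split <;> omega⟩ : ℕ) <
     (efn q l a0 k0 hl ha hk π ρ ⟨posex a0 l (u':ℕ), by unfold posex; have := u'.isLt; split <;> omega⟩ : ℕ))
      ↔ ((π u : ℕ) < (π u' : ℕ)) := by
  rcases eq_or_ne u u' with rfl | huu
  · simp
  have key : ∀ w : Fin (q+1),
      ((π w : ℕ) = k0 ∧ k0 ≤ (efn q l a0 k0 hl ha hk π ρ ⟨posex a0 l (w:ℕ), by unfold posex; have := w.isLt; split <;> omega⟩ : ℕ) ∧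
        (efn q l a0 k0 hl ha hk π ρ ⟨posex a0 l (w:ℕ), by unfold posex; have := w.isLt; split <;> omega⟩ : ℕ) < k0 + l) ∨
      ((π w : ℕ) ≠ k0 ∧ (efn q l a0 k0 hl ha hk π ρ ⟨posex a0 l (w:ℕ), by unfold posex; have := w.isLt; split <;> omega⟩ : ℕ) = vex l k0 (π w)) := by
    intro w
    rcases eq_or_ne (w:ℕ) a0 with hw | hw
    · left
      constructor
      · have : w = (⟨a0, by omega⟩ : Fin (q+1)) := Fin.ext hw
        rw [this, hπ]
      · have hpos : posex a0 l (w:ℕ) = a0 := by unfold posex; split <;> omega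
        have := (efn_block_iff hl ha hk π ρ hπ
          ⟨posex a0 l (w:ℕ), by unfold posex; have := w.isLt; split <;> omega⟩).mpr
          (by simp only [Fin.val_mk]; omega)
        exact this
    · right
      refine ⟨pi_ne (l := l) ha hk π hπ hw, ?_⟩
      apply efn_val_out
      rcases lt_or_ge (w:ℕ) a0 with h1 | h1
      · left; constructor
        · show posex a0 l (w:ℕ) < a0; unfold posex; split <;> omega
        · show (w:ℕ) = posex a0 l (w:ℕ); unfold posex; split <;> omega
      · right
        have h1' : a0 < (w:ℕ) := by omega
        constructor
        · show a0 + l ≤ posex a0 l (w:ℕ); unfold posex; split <;> omega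
        · show (w:ℕ) = posex a0 l (w:ℕ) - (l-1); unfold posex; split <;> omega
  apply cmp_core l k0 _ _ _ _ (key u) (key u')
  rintro ⟨hu, hu'⟩
  apply huu
  apply π.injective
  exact Fin.ext (by rw [hu, hu'])

end
end ClusterProof

namespace ClusterProof
section
variable {q l a0 k0 : ℕ} (hl : 1 ≤ l) (ha : a0 ≤ q) (hk : k0 ≤ q)
  (π : Equiv.Perm (Fin (q+1))) (ρ : Equiv.Perm (Fin l))
  (hπ : π ⟨a0, by omega⟩ = ⟨k0, by omega⟩)

include hπ in
lemma contains_left {mm : ℕ} (τ0 : Fin mm → Fin mm) (hc : Contains ⇑π τ0) :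
    Contains ⇑(eperm hl ha hk π ρ hπ) τ0 := by
  obtain ⟨f, hf, hiff⟩ := hc
  refine ⟨fun j => ⟨posex a0 l ((f j : ℕ)), by
    unfold posex; have := (f j).isLt; split <;> omega⟩, ?_, ?_⟩
  · intro j j' hjj
    have := hf hjj
    rw [Fin.lt_def] at this ⊢
    exact posex_lt_posex this
  · intro j j'
    rw [← hiff j j']
    rw [Fin.lt_def, Fin.lt_def]
    exact efn_posex_cmp hl ha hk π ρ hπ (f j) (f j')

include hπ in
lemma contains_right {mm : ℕ} (τ0 : Fin mm → Fin mm) (hc : Contains ⇑ρ τ0) :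
    Contains ⇑(eperm hl ha hk π ρ hπ) τ0 := by
  obtain ⟨f, hf, hiff⟩ := hc
  have hval : ∀ j : Fin mm,
      (efn q l a0 k0 hl ha hk π ρ ⟨a0 + (f j : ℕ), by have := (f j).isLt; omega⟩ : ℕ)
        = k0 + (ρ (f j) : ℕ) := by
    intro j
    rw [efn_mid (by simp) (by simp only [Fin.val_mk]; have := (f j).isLt; omega)]
    congr 1
    exact congrArg (fun x => ((ρ x : Fin l) : ℕ)) (Fin.ext (by simp))
  refine ⟨fun j => ⟨a0 + (f j : ℕ), by have := (f j).isLt; omega⟩, ?_, ?_⟩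
  · intro j j' hjj
    have := hf hjj
    rw [Fin.lt_def] at this ⊢
    simp only [Fin.val_mk]
    omega
  · intro j j'
    rw [← hiff j j', Fin.lt_def, Fin.lt_def]
    simp only [eperm_apply]
    rw [hval j, hval j']
    omega

end
end ClusterProof

namespace ClusterProof

lemma card_filter_interval {N : ℕ} (a0 l : ℕ) (h : a0 + l ≤ N) :
    (Finset.univ.filter fun i : Fin N => a0 ≤ (i:ℕ) ∧ (i:ℕ) < a0 + l).card = l := by
  apply Finset.card_eq_of_bijective (fun i hi => ⟨a0 + i, by omega⟩)
  · intro x hx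
    simp only [Finset.mem_filter, Finset.mem_univ, true_and] at hx
    exact ⟨(x:ℕ) - a0, by omega, Fin.ext (by simp; omega)⟩
  · intro i hi
    simp only [Finset.mem_filter, Finset.mem_univ, true_and, Fin.val_mk]
    omega
  · intro i j hi hj hij
    have := Fin.mk.inj hij
    omega

lemma clusterAt_iff {N : ℕ} (σ : Equiv.Perm (Fin N)) {l a0 k0 : ℕ} (hal : a0 + l ≤ N) :
    ClusterAt l (k0+1) (a0+1) σ ↔
      ∀ i : Fin N, a0 ≤ (i:ℕ) → (i:ℕ) < a0 + l → (k0 ≤ (σ i : ℕ) ∧ (σ i : ℕ) < k0 + l) := by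
  unfold ClusterAt
  have hfe : (Finset.univ.filter fun i : Fin N => a0+1 ≤ (i:ℕ)+1 ∧ (i:ℕ)+1 < a0+1+l)
      = Finset.univ.filter fun i : Fin N => a0 ≤ (i:ℕ) ∧ (i:ℕ) < a0+l := by
    apply Finset.filter_congr
    intro i _
    omega
  rw [hfe]
  constructor
  · intro h i h1 h2
    have hm : (σ i : ℕ) + 1 ∈ Finset.Ico (k0+1) (k0+1+l) := by
      rw [← h]
      exact Finset.mem_image_of_mem _ (Finset.mem_filter.mpr ⟨Finset.mem_univ i, by omega⟩)
    rw [Finset.mem_Ico] at hm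
    omega
  · intro h
    apply Finset.eq_of_subset_of_card_le
    · intro x hx
      simp only [Finset.mem_image, Finset.mem_filter, Finset.mem_univ, true_and] at hx
      obtain ⟨i, ⟨h1, h2⟩, rfl⟩ := hx
      have := h i h1 h2
      rw [Finset.mem_Ico]
      omega
    · rw [Nat.card_Ico, Finset.card_image_of_injOn, card_filter_interval a0 l hal]
      · omega
      · intro i _ j _ hij
        simp only at hij
        exact σ.injective (Fin.ext (by omega))

lemma clusterAt_pos {N : ℕ} (σ : Equiv.Perm (Fin N)) {l a0 k0 : ℕ}
    (h : ClusterAt l (k0+1) (a0+1) σ) (i : Fin N)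
    (hv : k0 ≤ (σ i : ℕ) ∧ (σ i : ℕ) < k0 + l) : a0 ≤ (i:ℕ) ∧ (i:ℕ) < a0 + l := by
  unfold ClusterAt at h
  have hm : (σ i : ℕ) + 1 ∈ Finset.Ico (k0+1) (k0+1+l) := by rw [Finset.mem_Ico]; omega
  rw [← h] at hm
  simp only [Finset.mem_image, Finset.mem_filter, Finset.mem_univ, true_and] at hm
  obtain ⟨i', ⟨h1, h2⟩, h3⟩ := hm
  have : i' = i := σ.injective (Fin.ext (by omega))
  subst this
  omega

lemma finset_interval (S : Finset ℕ) (hne : S.Nonempty)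
    (hclosed : ∀ x ∈ S, ∀ z ∈ S, ∀ y, x ≤ y → y ≤ z → y ∈ S) :
    S = Finset.Icc (S.min' hne) (S.max' hne) := by
  ext y
  rw [Finset.mem_Icc]
  constructor
  · intro hy
    exact ⟨S.min'_le y hy, S.le_max' y hy⟩
  · intro ⟨h1, h2⟩
    exact hclosed _ (S.min'_mem hne) _ (S.max'_mem hne) y h1 h2

end ClusterProof

namespace ClusterProof

def pctr (a0 l p : ℕ) : ℕ := if p < a0 then p else if p < a0 + l then a0 else p - (l-1)

section
variable {q l a0 k0 : ℕ} (hl : 1 ≤ l) (ha : a0 ≤ q) (hk : k0 ≤ q)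
  (π : Equiv.Perm (Fin (q+1))) (ρ : Equiv.Perm (Fin l))
  (hπ : π ⟨a0, by omega⟩ = ⟨k0, by omega⟩)

include hπ in
lemma contains_back {mm : ℕ} (τ0 : Equiv.Perm (Fin mm)) (hcf : ClusterFree τ0)
    (hc : Contains ⇑(eperm hl ha hk π ρ hπ) ⇑τ0) : Contains ⇑π ⇑τ0 ∨ Contains ⇑ρ ⇑τ0 := by
  obtain ⟨f, hf, hiff⟩ := hc
  by_cases hall : ∀ j : Fin mm, a0 ≤ (f j : ℕ) ∧ (f j : ℕ) < a0 + l
  · -- all inside the block: pattern inside ρ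
    right
    set g : Fin mm → Fin l := fun j => ⟨(f j : ℕ) - a0, by have := (hall j); omega⟩ with hg
    have hval : ∀ j : Fin mm,
        (eperm hl ha hk π ρ hπ (f j) : ℕ) = k0 + (ρ (g j) : ℕ) := by
      intro j
      rw [eperm_apply, efn_mid (hall j).1 (hall j).2]
    refine ⟨g, ?_, ?_⟩
    · intro j j' hjj
      have h1 := hf hjj
      rw [Fin.lt_def] at h1 ⊢
      have h2 := (hall j).1
      simp only [hg, Fin.val_mk]
      omega
    · intro j j'
      rw [← hiff j j', Fin.lt_def, Fin.lt_def, hval j, hval j']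
      omega
  · push_neg at hall
    obtain ⟨j0, hj0⟩ := hall
    set J : Finset (Fin mm) :=
      Finset.univ.filter (fun j => a0 ≤ (f j : ℕ) ∧ (f j : ℕ) < a0 + l) with hJ
    have hmemJ : ∀ j : Fin mm, j ∈ J ↔ (a0 ≤ (f j : ℕ) ∧ (f j : ℕ) < a0 + l) := by
      intro j; simp [hJ]
    by_cases hc1 : J.card ≤ 1
    · -- at most one inside the block: pattern inside π
      left
      set g : Fin mm → Fin (q+1) := fun j => ⟨pctr a0 l (f j : ℕ), by
        have := (f j).isLt; unfold pctr; split_ifs <;> omega⟩ with hg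
      have hgval : ∀ j : Fin mm, (g j : ℕ) = pctr a0 l (f j : ℕ) := fun j => rfl
      have hnotboth : ∀ j j' : Fin mm, j ≠ j' →
          ¬((a0 ≤ (f j : ℕ) ∧ (f j : ℕ) < a0 + l) ∧
            (a0 ≤ (f j' : ℕ) ∧ (f j' : ℕ) < a0 + l)) := by
        rintro j j' hne ⟨hb, hb'⟩
        have : 1 < J.card := Finset.one_lt_card.mpr
          ⟨j, (hmemJ j).mpr hb, j', (hmemJ j').mpr hb', hne⟩
        omega
      have hd : ∀ j : Fin mm,
          ((π (g j) : ℕ) = k0 ∧ k0 ≤ (eperm hl ha hk π ρ hπ (f j) : ℕ) ∧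
            (eperm hl ha hk π ρ hπ (f j) : ℕ) < k0 + l) ∨
          ((π (g j) : ℕ) ≠ k0 ∧
            (eperm hl ha hk π ρ hπ (f j) : ℕ) = vex l k0 (π (g j))) := by
        intro j
        by_cases hbj : a0 ≤ (f j : ℕ) ∧ (f j : ℕ) < a0 + l
        · left
          have hga : g j = (⟨a0, by omega⟩ : Fin (q+1)) := by
            apply Fin.ext
            simp only [Fin.val_mk]
            rw [hgval]; unfold pctr
            split_ifs <;> omega
          refine ⟨?_, (efn_block_iff hl ha hk π ρ hπ (f j)).mpr hbj⟩
          rw [hga, hπ]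
        · right
          have hgne : (g j : ℕ) ≠ a0 := by
            rw [hgval]; unfold pctr; split_ifs <;> omega
          refine ⟨pi_ne (l := l) ha hk π hπ hgne, ?_⟩
          rw [eperm_apply]
          apply efn_val_out
          rcases lt_or_ge ((f j : ℕ)) a0 with h1 | h1
          · left
            refine ⟨h1, ?_⟩
            rw [hgval]; unfold pctr; split_ifs <;> omega
          · right
            have h2 : a0 + l ≤ (f j : ℕ) := by omega
            refine ⟨h2, ?_⟩
            rw [hgval]; unfold pctr; split_ifs <;> omega
      refine ⟨g, ?_, ?_⟩
      · intro j j' hjj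
        have h1 := hf hjj
        rw [Fin.lt_def] at h1 ⊢
        rw [hgval, hgval]
        have h2 := hnotboth j j' (ne_of_lt hjj)
        unfold pctr
        have := (f j').isLt
        split_ifs <;> omega
      · intro j j'
        rcases eq_or_ne j j' with rfl | hne
        · simp
        rw [← hiff j j', Fin.lt_def, Fin.lt_def]
        refine (cmp_core l k0 _ _ _ _ (hd j) (hd j') ?_).symm
        rintro ⟨h1, h2⟩
        have hgg : g j = g j' := π.injective (Fin.ext (by rw [h1, h2]))
        have hvv : pctr a0 l (f j : ℕ) = pctr a0 l (f j' : ℕ) := by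
          rw [← hgval, ← hgval, hgg]
        have hfne : (f j : ℕ) ≠ (f j' : ℕ) := by
          intro hcon
          exact hne (hf.injective (Fin.ext hcon))
        apply hnotboth j j' hne
        have := (f j).isLt
        have := (f j').isLt
        unfold pctr at hvv
        split_ifs at hvv <;> omega
    · -- between 2 and mm-1 inside the block: contradiction with cluster-freeness
      exfalso
      have hc2 : 2 ≤ J.card := by omega
      have hneJ : J.Nonempty := Finset.card_pos.mp (by omega)
      set JN : Finset ℕ := J.image (fun j : Fin mm => (j : ℕ)) with hJN
      set VN : Finset ℕ := J.image (fun j : Fin mm => (τ0 j : ℕ)) with hVN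
      have hJNcard : JN.card = J.card := by
        rw [hJN]
        exact Finset.card_image_of_injective _ Fin.val_injective
      have hVNcard : VN.card = J.card := by
        rw [hVN]
        exact Finset.card_image_of_injective _ (fun x y hxy => τ0.injective (Fin.ext hxy))
      have hJNne : JN.Nonempty := by rw [hJN]; exact hneJ.image _
      have hVNne : VN.Nonempty := by rw [hVN]; exact hneJ.image _
      have hJNlt : ∀ x ∈ JN, x < mm := by
        intro x hx
        simp only [hJN, Finset.mem_image] at hx
        obtain ⟨j, _, rfl⟩ := hx
        exact j.isLt
      have hVNlt : ∀ x ∈ VN, x < mm := by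
        intro x hx
        simp only [hVN, Finset.mem_image] at hx
        obtain ⟨j, _, rfl⟩ := hx
        exact (τ0 j).isLt
      -- JN is interval-closed
      have hJNcl : JN = Finset.Icc (JN.min' hJNne) (JN.max' hJNne) := by
        apply finset_interval
        intro x hx z hz y hxy hyz
        simp only [hJN, Finset.mem_image] at hx hz ⊢
        obtain ⟨j1, hj1, rfl⟩ := hx
        obtain ⟨j3, hj3, rfl⟩ := hz
        have hy : y < mm := by have := j3.isLt; omega
        refine ⟨⟨y, hy⟩, ?_, rfl⟩
        rw [hmemJ] at hj1 hj3 ⊢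
        have hm1 : f j1 ≤ f ⟨y, hy⟩ := hf.monotone (by rw [Fin.le_def]; exact hxy)
        have hm2 : f ⟨y, hy⟩ ≤ f j3 := hf.monotone (by rw [Fin.le_def]; exact hyz)
        rw [Fin.le_def] at hm1 hm2
        omega
      -- VN is interval-closed
      have hVNcl : VN = Finset.Icc (VN.min' hVNne) (VN.max' hVNne) := by
        apply finset_interval
        intro x hx z hz y hxy hyz
        simp only [hVN, Finset.mem_image] at hx hz ⊢
        obtain ⟨j1, hj1, rfl⟩ := hx
        obtain ⟨j3, hj3, rfl⟩ := hz
        have hy : y < mm := by have := (τ0 j3).isLt; omega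
        set j2 : Fin mm := τ0.symm ⟨y, hy⟩ with hj2
        have hty : τ0 j2 = ⟨y, hy⟩ := τ0.apply_symm_apply _
        refine ⟨j2, ?_, by rw [hty]⟩
        -- show j2 ∈ J
        have hs1 : (eperm hl ha hk π ρ hπ (f j1) : ℕ) ≤ (eperm hl ha hk π ρ hπ (f j2) : ℕ) := by
          by_contra hcon
          push_neg at hcon
          have := (hiff j2 j1).mp (by rw [Fin.lt_def]; exact hcon)
          rw [Fin.lt_def, hty] at this
          simp at this
          omega
        have hs2 : (eperm hl ha hk π ρ hπ (f j2) : ℕ) ≤ (eperm hl ha hk π ρ hπ (f j3) : ℕ) := by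
          by_contra hcon
          push_neg at hcon
          have := (hiff j3 j2).mp (by rw [Fin.lt_def]; exact hcon)
          rw [Fin.lt_def, hty] at this
          simp at this
          omega
        rw [hmemJ] at hj1 hj3 ⊢
        have hb1 := (eperm_block_iff hl ha hk π ρ hπ (f j1)).mpr hj1
        have hb3 := (eperm_block_iff hl ha hk π ρ hπ (f j3)).mpr hj3
        exact (eperm_block_iff hl ha hk π ρ hπ (f j2)).mp (by constructor <;> omega)
      -- apply cluster-freeness
      set c := J.card with hc
      set jm := JN.min' hJNne with hjm
      set vm := VN.min' hVNne with hvm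
      have hjMlt : JN.max' hJNne < mm := hJNlt _ (JN.max'_mem hJNne)
      have hvMlt : VN.max' hVNne < mm := hVNlt _ (VN.max'_mem hVNne)
      have hJcard2 : JN.card = JN.max' hJNne + 1 - jm := by
        conv_lhs => rw [hJNcl]
        rw [Nat.card_Icc]
      have hVcard2 : VN.card = VN.max' hVNne + 1 - vm := by
        conv_lhs => rw [hVNcl]
        rw [Nat.card_Icc]
      have hjmle : jm ≤ JN.max' hJNne := Finset.min'_le _ _ (JN.max'_mem hJNne)
      have hvmle : vm ≤ VN.max' hVNne := Finset.min'_le _ _ (VN.max'_mem hVNne)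
      have hcmm : c < mm := by
        by_contra hcon
        push_neg at hcon
        have : J = Finset.univ := Finset.eq_univ_of_card _ (le_antisymm (Finset.card_le_univ J)
          (by simpa using hcon))
        have : j0 ∈ J := this ▸ Finset.mem_univ j0
        rw [hmemJ] at this
        exact absurd this.2 (not_lt.mpr (hj0 this.1))
      apply hcf c (jm + 1) (vm + 1) hc2 (by omega) (by omega) (by omega)
      rw [clusterAt_iff τ0 (by omega)]
      intro i h1 h2
      have hiJN : (i : ℕ) ∈ JN := by
        rw [hJNcl, Finset.mem_Icc]
        omega
      have hiJ : i ∈ J := by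
        simp only [hJN, Finset.mem_image] at hiJN
        obtain ⟨j, hj, hji⟩ := hiJN
        rwa [show j = i from Fin.ext hji] at hj
      have hiVN : (τ0 i : ℕ) ∈ VN := by
        rw [hVN]
        exact Finset.mem_image_of_mem _ hiJ
      rw [hVNcl, Finset.mem_Icc] at hiVN
      omega

end
end ClusterProof

namespace ClusterProof

def vctr (l k0 w : ℕ) : ℕ := if w < k0 then w else w - (l-1)

lemma vctr_lt {q l k0 w : ℕ} (hl : 1 ≤ l) (hk : k0 ≤ q) (hw : w < q + l)
    (ho : w < k0 ∨ k0 + l ≤ w) : vctr l k0 w < q + 1 := by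
  unfold vctr; split_ifs <;> omega

section
variable {q l a0 k0 : ℕ} (hl : 1 ≤ l) (ha : a0 ≤ q) (hk : k0 ≤ q)
  (σ : Equiv.Perm (Fin (q+l))) (hσ : ClusterAt l (k0+1) (a0+1) σ)

include hσ in
lemma reconstruction :
    ∃ (π : Equiv.Perm (Fin (q+1))) (ρ : Equiv.Perm (Fin l))
      (hπ : π ⟨a0, by omega⟩ = ⟨k0, by omega⟩), eperm hl ha hk π ρ hπ = σ := by
  have hblk : ∀ i : Fin (q+l), a0 ≤ (i:ℕ) → (i:ℕ) < a0+l →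
      k0 ≤ (σ i : ℕ) ∧ (σ i : ℕ) < k0+l := (clusterAt_iff σ (by omega)).mp hσ
  have hout : ∀ i : Fin (q+l), ¬(a0 ≤ (i:ℕ) ∧ (i:ℕ) < a0+l) →
      ((σ i : ℕ) < k0 ∨ k0 + l ≤ (σ i : ℕ)) := by
    intro i hi
    by_contra hcon
    push_neg at hcon
    exact hi (clusterAt_pos σ hσ i ⟨by omega, by omega⟩)
  have hsig : ∀ (x y : Fin (q+l)), (x:ℕ) = (y:ℕ) → (σ x : ℕ) = (σ y : ℕ) :=
    fun x y h => congrArg (fun z => ((σ z : Fin (q+l)) : ℕ)) (Fin.ext h)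
  -- the block pattern ρ
  set rfun : Fin l → Fin l := fun r =>
    ⟨(σ ⟨a0 + (r:ℕ), by have := r.isLt; omega⟩ : ℕ) - k0, by
      have := hblk ⟨a0 + (r:ℕ), by have := r.isLt; omega⟩
        (by simp only [Fin.val_mk]; omega)
        (by simp only [Fin.val_mk]; have := r.isLt; omega)
      omega⟩ with hrfun
  have hrinj : Function.Injective rfun := by
    intro r r' hrr
    have h1 := hblk ⟨a0 + (r:ℕ), by have := r.isLt; omega⟩
      (by simp only [Fin.val_mk]; omega)
      (by simp only [Fin.val_mk]; have := r.isLt; omega)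
    have h1' := hblk ⟨a0 + (r':ℕ), by have := r'.isLt; omega⟩
      (by simp only [Fin.val_mk]; omega)
      (by simp only [Fin.val_mk]; have := r'.isLt; omega)
    have h2 := Fin.mk.inj hrr
    have h3 := σ.injective (Fin.ext (show (σ ⟨a0 + (r:ℕ), _⟩ : ℕ) = (σ ⟨a0 + (r':ℕ), _⟩ : ℕ) by omega))
    have h4 := Fin.mk.inj h3
    exact Fin.ext (by omega)
  set ρ : Equiv.Perm (Fin l) :=
    Equiv.ofBijective rfun (Finite.injective_iff_bijective.mp hrinj) with hρ
  -- the outside pattern π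
  set pfun : Fin (q+1) → Fin (q+1) := fun j =>
    if hj : (j:ℕ) = a0 then ⟨k0, by omega⟩
    else ⟨vctr l k0 ((σ ⟨posex a0 l (j:ℕ), by
        unfold posex; have := j.isLt; split <;> omega⟩ : ℕ)),
      vctr_lt hl hk (σ _).isLt (hout _ (by
        simp only [Fin.val_mk]
        unfold posex; split <;> omega))⟩ with hpfun
  have houtp : ∀ (j : Fin (q+1)), (j:ℕ) ≠ a0 →
      ((σ ⟨posex a0 l (j:ℕ), by unfold posex; have := j.isLt; split <;> omega⟩ : ℕ) < k0 ∨
       k0 + l ≤ (σ ⟨posex a0 l (j:ℕ), by unfold posex; have := j.isLt; split <;> omega⟩ : ℕ)) := by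
    intro j hj
    apply hout
    simp only [Fin.val_mk]
    unfold posex; split <;> omega
  have hpval : ∀ (j : Fin (q+1)), (j:ℕ) ≠ a0 → ∃ w : ℕ,
      (w < k0 ∨ k0 + l ≤ w) ∧ w < q + l ∧ (pfun j : ℕ) = vctr l k0 w ∧
      ∃ x : Fin (q+l), (x:ℕ) = posex a0 l (j:ℕ) ∧ (σ x : ℕ) = w := by
    intro j hj
    refine ⟨(σ ⟨posex a0 l (j:ℕ), by unfold posex; have := j.isLt; split <;> omega⟩ : ℕ),
      ?_, (σ _).isLt, ?_, ⟨_, rfl, rfl⟩⟩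
    · apply hout
      simp only [Fin.val_mk]
      unfold posex; split <;> omega
    · simp only [hpfun, dif_neg hj]
  have hvctr_ne : ∀ w : ℕ, (w < k0 ∨ k0 + l ≤ w) → vctr l k0 w ≠ k0 := by
    intro w hw
    unfold vctr; split_ifs <;> omega
  have hvctr_inj : ∀ w w' : ℕ, (w < k0 ∨ k0 + l ≤ w) → (w' < k0 ∨ k0 + l ≤ w') →
      vctr l k0 w = vctr l k0 w' → w = w' := by
    intro w w' hw hw' hww
    unfold vctr at hww; split_ifs at hww <;> omega
  have hpinj : Function.Injective pfun := by
    intro j j' hjj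
    have hjj' := congrArg Fin.val hjj
    by_cases h1 : (j:ℕ) = a0 <;> by_cases h1' : (j':ℕ) = a0
    · exact Fin.ext (h1.trans h1'.symm)
    · exfalso
      obtain ⟨w', hw1, hw2, hw3, x', hx1, hx2⟩ := hpval j' h1'
      rw [hw3] at hjj'
      simp only [hpfun, dif_pos h1, Fin.val_mk] at hjj'
      exact hvctr_ne w' hw1 hjj'.symm
    · exfalso
      obtain ⟨w, hw1, hw2, hw3, x, hx1, hx2⟩ := hpval j h1
      rw [hw3] at hjj'
      simp only [hpfun, dif_pos h1', Fin.val_mk] at hjj'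
      exact hvctr_ne w hw1 hjj'
    · obtain ⟨w, hw1, hw2, hw3, x, hx1, hx2⟩ := hpval j h1
      obtain ⟨w', hw1', hw2', hw3', x', hx1', hx2'⟩ := hpval j' h1'
      rw [hw3, hw3'] at hjj'
      have hww := hvctr_inj w w' hw1 hw1' hjj'
      have hxx : x = x' := σ.injective (Fin.ext (by omega))
      have h4 : posex a0 l (j:ℕ) = posex a0 l (j':ℕ) := by
        rw [← hx1, ← hx1', hxx]
      apply Fin.ext
      unfold posex at h4
      split_ifs at h4 <;> omega
  set π : Equiv.Perm (Fin (q+1)) :=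
    Equiv.ofBijective pfun (Finite.injective_iff_bijective.mp hpinj) with hπd
  have hπv : ∀ j : Fin (q+1), π j = pfun j := fun j => rfl
  have hπ : π ⟨a0, by omega⟩ = ⟨k0, by omega⟩ := by
    rw [hπv]
    exact dif_pos rfl
  refine ⟨π, ρ, hπ, ?_⟩
  apply Equiv.ext
  intro i
  apply Fin.ext
  rw [eperm_apply]
  rcases lt_or_ge (i:ℕ) a0 with h1 | h1
  · rw [efn_lo h1]
    rw [hπv]
    obtain ⟨w, hw1, hw2, hw3, x, hx1, hx2⟩ :=
      hpval ⟨(i:ℕ), by omega⟩ (by simp only [Fin.val_mk]; omega)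
    rw [hw3]
    have hxi : x = i := by
      apply Fin.ext
      rw [hx1]
      simp only [Fin.val_mk]
      unfold posex
      split <;> omega
    rw [hxi] at hx2
    unfold vex vctr
    split_ifs <;> omega
  rcases lt_or_ge (i:ℕ) (a0+l) with h2 | h2
  · rw [efn_mid h1 h2]
    have hρv : (ρ ⟨(i:ℕ) - a0, by omega⟩ : ℕ) = (rfun ⟨(i:ℕ) - a0, by omega⟩ : ℕ) := rfl
    rw [hρv]
    simp only [hrfun, Fin.val_mk]
    have hx : (σ ⟨a0 + ((i:ℕ) - a0), by have := i.isLt; omega⟩ : ℕ) = (σ i : ℕ) := by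
      apply hsig; simp only [Fin.val_mk]; omega
    rw [hx]
    have h3 := hblk i h1 h2
    omega
  · rw [efn_hi h2]
    rw [hπv]
    obtain ⟨w, hw1, hw2, hw3, x, hx1, hx2⟩ :=
      hpval ⟨(i:ℕ) - (l-1), by have := i.isLt; omega⟩ (by simp only [Fin.val_mk]; omega)
    rw [hw3]
    have hxi : x = i := by
      apply Fin.ext
      rw [hx1]
      simp only [Fin.val_mk]
      unfold posex
      split <;> omega
    rw [hxi] at hx2
    unfold vex vctr
    split_ifs <;> omega

end
end ClusterProof

namespace ClusterProof

lemma ncard_sprod {α β : Type*} (s : Set α) (t : Set β) :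
    (s ×ˢ t).ncard = s.ncard * t.ncard := by
  rw [← Nat.card_coe_set_eq, ← Nat.card_coe_set_eq, ← Nat.card_coe_set_eq,
    Nat.card_congr (Equiv.Set.prod s t), Nat.card_prod]

section
variable {q l k0 : ℕ} (hl : 1 ≤ l) (hk : k0 ≤ q)

noncomputable def bigE (π : Equiv.Perm (Fin (q+1))) (ρ : Equiv.Perm (Fin l)) :
    Equiv.Perm (Fin (q+l)) :=
  eperm hl (show ((π.symm ⟨k0, by omega⟩ : Fin (q+1)) : ℕ) ≤ q by
      have := (π.symm ⟨k0, by omega⟩).isLt; omega) hk π ρ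
    (by rw [Fin.eta]; exact π.apply_symm_apply _)

lemma eperm_congr {a0 a0' : ℕ} (h : a0 = a0') (π : Equiv.Perm (Fin (q+1)))
    (ρ : Equiv.Perm (Fin l)) (ha : a0 ≤ q) (ha' : a0' ≤ q)
    (hπ : π ⟨a0, by omega⟩ = ⟨k0, by omega⟩) (hπ' : π ⟨a0', by omega⟩ = ⟨k0, by omega⟩) :
    eperm hl ha hk π ρ hπ = eperm hl ha' hk π ρ hπ' := by
  subst h; rfl

lemma bigE_eq_eperm {a0 : ℕ} (π : Equiv.Perm (Fin (q+1))) (ρ : Equiv.Perm (Fin l))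
    (ha : a0 ≤ q) (hπ : π ⟨a0, by omega⟩ = ⟨k0, by omega⟩) :
    bigE hl hk π ρ = eperm hl ha hk π ρ hπ := by
  have h : ((π.symm ⟨k0, by omega⟩ : Fin (q+1)) : ℕ) = a0 := by
    have h2 : π.symm ⟨k0, by omega⟩ = ⟨a0, by omega⟩ := by
      rw [Equiv.symm_apply_eq, hπ]
    rw [h2]
  exact eperm_congr hl hk h π ρ _ ha _ hπ

end
end ClusterProof

namespace ClusterProof
section
variable {q l k0 : ℕ} (hl : 1 ≤ l) (hk : k0 ≤ q)

lemma eperm_inj_pair {a0 a0' : ℕ} (ha : a0 ≤ q) (ha' : a0' ≤ q)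
    (π π' : Equiv.Perm (Fin (q+1))) (ρ ρ' : Equiv.Perm (Fin l))
    (hπa : π ⟨a0, by omega⟩ = ⟨k0, by omega⟩) (hπa' : π' ⟨a0', by omega⟩ = ⟨k0, by omega⟩)
    (hE : eperm hl ha hk π ρ hπa = eperm hl ha' hk π' ρ' hπa') : π = π' ∧ ρ = ρ' := by
  have hval : ∀ i : Fin (q+l),
      (eperm hl ha hk π ρ hπa i : ℕ) = (eperm hl ha' hk π' ρ' hπa' i : ℕ) :=
    fun i => congrArg Fin.val (DFunLike.congr_fun hE i)
  -- a0 = a0'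
  have haa : a0 = a0' := by
    have h1 := (eperm_block_iff hl ha hk π ρ hπa ⟨a0, by omega⟩).mpr
      (by simp only [Fin.val_mk]; omega)
    rw [hval ⟨a0, by omega⟩] at h1
    have h2 := (eperm_block_iff hl ha' hk π' ρ' hπa' ⟨a0, by omega⟩).mp h1
    have h1' := (eperm_block_iff hl ha' hk π' ρ' hπa' ⟨a0', by omega⟩).mpr
      (by simp only [Fin.val_mk]; omega)
    rw [← hval ⟨a0', by omega⟩] at h1'
    have h2' := (eperm_block_iff hl ha hk π ρ hπa ⟨a0', by omega⟩).mp h1'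
    simp only [Fin.val_mk] at h2 h2'
    omega
  -- ρ = ρ'
  have hρρ : ρ = ρ' := by
    apply Equiv.ext; intro r; apply Fin.ext
    have hpf : a0 + (r:ℕ) < q + l := by have := r.isLt; omega
    have h1 : (eperm hl ha hk π ρ hπa ⟨a0 + (r:ℕ), hpf⟩ : ℕ) = k0 + (ρ r : ℕ) := by
      rw [eperm_apply, efn_mid (by simp only [Fin.val_mk]; omega)
        (by simp only [Fin.val_mk]; have := r.isLt; omega)]
      congr 1
      exact congrArg (fun x => ((ρ x : Fin l) : ℕ)) (Fin.ext (by simp only [Fin.val_mk]; omega))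
    have h2 : (eperm hl ha' hk π' ρ' hπa' ⟨a0 + (r:ℕ), hpf⟩ : ℕ) = k0 + (ρ' r : ℕ) := by
      rw [eperm_apply, efn_mid (by simp only [Fin.val_mk]; omega)
        (by simp only [Fin.val_mk]; have := r.isLt; omega)]
      congr 1
      exact congrArg (fun x => ((ρ' x : Fin l) : ℕ)) (Fin.ext (by simp only [Fin.val_mk]; omega))
    have h3 := hval ⟨a0 + (r:ℕ), hpf⟩
    omega
  -- π = π'
  have hππ : π = π' := by
    apply Equiv.ext; intro jj; apply Fin.ext
    rcases eq_or_ne ((jj:ℕ)) a0 with h1 | h1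
    · have e1 : jj = ⟨a0, by omega⟩ := Fin.ext h1
      have e2 : (⟨a0, by omega⟩ : Fin (q+1)) = ⟨a0', by omega⟩ := Fin.ext haa
      rw [e1, hπa, e2, hπa']
    · have hposlt : posex a0 l (jj:ℕ) < q + l := by
        unfold posex; have := jj.isLt; split <;> omega
      have hcase : ((⟨posex a0 l (jj:ℕ), hposlt⟩ : Fin (q+l)) : ℕ) < a0 ∧ (jj:ℕ) = ((⟨posex a0 l (jj:ℕ), hposlt⟩ : Fin (q+l)) : ℕ) ∨
          (a0 + l ≤ ((⟨posex a0 l (jj:ℕ), hposlt⟩ : Fin (q+l)) : ℕ) ∧ (jj:ℕ) = ((⟨posex a0 l (jj:ℕ), hposlt⟩ : Fin (q+l)) : ℕ) - (l-1)) := by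
        simp only [Fin.val_mk]
        unfold posex; split <;> omega
      have h2 := efn_val_out hl ha hk π ρ jj ⟨posex a0 l (jj:ℕ), hposlt⟩ hcase
      have hcase' : ((⟨posex a0 l (jj:ℕ), hposlt⟩ : Fin (q+l)) : ℕ) < a0' ∧ (jj:ℕ) = ((⟨posex a0 l (jj:ℕ), hposlt⟩ : Fin (q+l)) : ℕ) ∨
          (a0' + l ≤ ((⟨posex a0 l (jj:ℕ), hposlt⟩ : Fin (q+l)) : ℕ) ∧ (jj:ℕ) = ((⟨posex a0 l (jj:ℕ), hposlt⟩ : Fin (q+l)) : ℕ) - (l-1)) := by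
        simp only [Fin.val_mk]
        rw [← haa]
        unfold posex; split <;> omega
      have h2' := efn_val_out hl ha' hk π' ρ' jj ⟨posex a0 l (jj:ℕ), hposlt⟩ hcase'
      have h3 : (efn q l a0 k0 hl ha hk π ρ ⟨posex a0 l (jj:ℕ), hposlt⟩ : ℕ)
          = (efn q l a0' k0 hl ha' hk π' ρ' ⟨posex a0 l (jj:ℕ), hposlt⟩ : ℕ) :=
        hval ⟨posex a0 l (jj:ℕ), hposlt⟩
      rw [h2, h2'] at h3
      exact vex_inj h3
  exact ⟨hππ, hρρ⟩


set_option maxHeartbeats 1000000 in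
lemma bigE_injective :
    Function.Injective
      (fun p : Equiv.Perm (Fin (q+1)) × Equiv.Perm (Fin l) => bigE hl hk p.1 p.2) := by
  rintro ⟨π, ρ⟩ ⟨π', ρ'⟩ hE
  simp only at hE
  have ha : ((π.symm ⟨k0, by omega⟩ : Fin (q+1)) : ℕ) ≤ q := by
    have := (π.symm ⟨k0, by omega⟩).isLt; omega
  have ha' : ((π'.symm ⟨k0, by omega⟩ : Fin (q+1)) : ℕ) ≤ q := by
    have := (π'.symm ⟨k0, by omega⟩).isLt; omega
  have hπa : π ⟨((π.symm ⟨k0, by omega⟩ : Fin (q+1)) : ℕ), by omega⟩ = ⟨k0, by omega⟩ :=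
    (congrArg π (Fin.ext rfl)).trans (π.apply_symm_apply _)
  have hπa' : π' ⟨((π'.symm ⟨k0, by omega⟩ : Fin (q+1)) : ℕ), by omega⟩ = ⟨k0, by omega⟩ :=
    (congrArg π' (Fin.ext rfl)).trans (π'.apply_symm_apply _)
  have hE2 : eperm hl ha hk π ρ hπa = eperm hl ha' hk π' ρ' hπa' := hE
  obtain ⟨h1, h2⟩ := eperm_inj_pair hl hk ha ha' π π' ρ ρ' hπa hπa' hE2
  exact Prod.ext h1 h2
end
end ClusterProof

namespace ClusterProof

theorem main_count {m m' : ℕ} (τ : Equiv.Perm (Fin m)) (η : Equiv.Perm (Fin m'))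
    (hτ : ClusterFree τ) (hη : ClusterFree η) (q l k0 : ℕ) (hl : 1 ≤ l) (hk : k0 ≤ q) :
    (ClusterEvent (q+l) l (k0+1) ∩
        {σ : Equiv.Perm (Fin (q+l)) | Avoids ⇑σ ⇑τ ∧ Avoids ⇑σ ⇑η}).ncard
      = {σ : Equiv.Perm (Fin (q+1)) | Avoids ⇑σ ⇑τ ∧ Avoids ⇑σ ⇑η}.ncard *
        {σ : Equiv.Perm (Fin l) | Avoids ⇑σ ⇑τ ∧ Avoids ⇑σ ⇑η}.ncard := by
  have hset : ClusterEvent (q+l) l (k0+1) ∩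
      {σ : Equiv.Perm (Fin (q+l)) | Avoids ⇑σ ⇑τ ∧ Avoids ⇑σ ⇑η}
      = (fun p : Equiv.Perm (Fin (q+1)) × Equiv.Perm (Fin l) => bigE hl hk p.1 p.2) ''
        (({σ : Equiv.Perm (Fin (q+1)) | Avoids ⇑σ ⇑τ ∧ Avoids ⇑σ ⇑η}) ×ˢ
         ({σ : Equiv.Perm (Fin l) | Avoids ⇑σ ⇑τ ∧ Avoids ⇑σ ⇑η})) := by
    apply Set.Subset.antisymm
    · rintro σ ⟨⟨a, ha1, ha2, hca⟩, hσt, hσe⟩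
      obtain ⟨a0, rfl⟩ : ∃ a0, a = a0 + 1 := ⟨a - 1, by omega⟩
      have ha0 : a0 ≤ q := by omega
      obtain ⟨π, ρ, hπ, heq⟩ := reconstruction hl ha0 hk σ hca
      refine ⟨(π, ρ), Set.mem_prod.mpr ⟨⟨?_, ?_⟩, ⟨?_, ?_⟩⟩, ?_⟩
      · intro hcon; exact hσt (heq ▸ contains_left hl ha0 hk π ρ hπ ⇑τ hcon)
      · intro hcon; exact hσe (heq ▸ contains_left hl ha0 hk π ρ hπ ⇑η hcon)
      · intro hcon; exact hσt (heq ▸ contains_right hl ha0 hk π ρ hπ ⇑τ hcon)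
      · intro hcon; exact hσe (heq ▸ contains_right hl ha0 hk π ρ hπ ⇑η hcon)
      · show bigE hl hk π ρ = σ
        rw [bigE_eq_eperm hl hk π ρ ha0 hπ]
        exact heq
    · rintro σ ⟨⟨π, ρ⟩, hmem, rfl⟩
      obtain ⟨⟨hπt, hπe⟩, hρt, hρe⟩ := Set.mem_prod.mp hmem
      have ha : ((π.symm ⟨k0, by omega⟩ : Fin (q+1)) : ℕ) ≤ q := by
        have := (π.symm ⟨k0, by omega⟩).isLt; omega
      have hπa : π ⟨((π.symm ⟨k0, by omega⟩ : Fin (q+1)) : ℕ), by omega⟩ = ⟨k0, by omega⟩ :=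
        (congrArg π (Fin.ext rfl)).trans (π.apply_symm_apply _)
      have heq : bigE hl hk π ρ = eperm hl ha hk π ρ hπa :=
        bigE_eq_eperm hl hk π ρ ha hπa
      show bigE hl hk π ρ ∈ _
      rw [heq]
      refine ⟨⟨((π.symm ⟨k0, by omega⟩ : Fin (q+1)) : ℕ) + 1, by omega, by omega, ?_⟩, ?_, ?_⟩
      · rw [clusterAt_iff _ (by omega)]
        intro i h1 h2
        exact (eperm_block_iff hl ha hk π ρ hπa i).mpr ⟨h1, h2⟩
      · intro hcon
        rcases contains_back hl ha hk π ρ hπa τ hτ hcon with h | h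
        exacts [hπt h, hρt h]
      · intro hcon
        rcases contains_back hl ha hk π ρ hπa η hη hcon with h | h
        exacts [hπe h, hρe h]
  rw [hset, Set.ncard_image_of_injective _ (bigE_injective hl hk), ncard_sprod]

end ClusterProof


/-- exact count (and probability) for permutations avoiding two
cluster-free patterns `τ` and `η`. -/
theorem avoid_two_patterns_cluster_exact (m m' : ℕ)
    (τ : Equiv.Perm (Fin m)) (η : Equiv.Perm (Fin m'))
    (hτ : ClusterFree τ) (hη : ClusterFree η)
    (n : ℕ) (hn : 3 ≤ n) (l : ℕ) (hl2 : 2 ≤ l) (hln : l ≤ n - 1)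
    (k : ℕ) (hk1 : 1 ≤ k) (hk2 : k ≤ n - l + 1) :
    (ClusterEvent n l k ∩
        {σ : Equiv.Perm (Fin n) | Avoids ⇑σ ⇑τ ∧ Avoids ⇑σ ⇑η}).ncard =
      {σ : Equiv.Perm (Fin (n - l + 1)) | Avoids ⇑σ ⇑τ ∧ Avoids ⇑σ ⇑η}.ncard *
        {σ : Equiv.Perm (Fin l) | Avoids ⇑σ ⇑τ ∧ Avoids ⇑σ ⇑η}.ncard ∧
    ((ClusterEvent n l k ∩
        {σ : Equiv.Perm (Fin n) | Avoids ⇑σ ⇑τ ∧ Avoids ⇑σ ⇑η}).ncard : ℝ) /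
        ({σ : Equiv.Perm (Fin n) | Avoids ⇑σ ⇑τ ∧ Avoids ⇑σ ⇑η}.ncard : ℝ) =
      (({σ : Equiv.Perm (Fin (n - l + 1)) | Avoids ⇑σ ⇑τ ∧ Avoids ⇑σ ⇑η}.ncard *
          {σ : Equiv.Perm (Fin l) | Avoids ⇑σ ⇑τ ∧ Avoids ⇑σ ⇑η}.ncard : ℕ) : ℝ) /
        ({σ : Equiv.Perm (Fin n) | Avoids ⇑σ ⇑τ ∧ Avoids ⇑σ ⇑η}.ncard : ℝ) := by
  obtain ⟨q, rfl⟩ : ∃ q, n = q + l := ⟨n - l, by omega⟩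
  rw [show q + l - l + 1 = q + 1 from by omega]
  obtain ⟨k0, rfl⟩ : ∃ k0, k = k0 + 1 := ⟨k - 1, by omega⟩
  have hl1 : 1 ≤ l := by omega
  have hk0 : k0 ≤ q := by omega
  have main := ClusterProof.main_count τ η hτ hη q l k0 hl1 hk0
  exact ⟨main, by rw [main]⟩
end

section
/- Let m ≥ 2 and let τ ∈ S_m be a permutation that does not contain 12 tightly. Let l ≥ 2, n ≥ l+2, and let η ∈ S_{n-l+1} avoid τ, with η_a = k for some a and k with 1 ≤ a, k ≤ n-l+1. Define σ ∈ S_n by: σ_i = η_i if i < a and η_i < k; σ_i = η_i + l - 1 if i < a and η_i > k; σ_{a+j} = k + j for j = 0, 1, …, l-1; and for i ≥ a+l, σ_i = η_{i-l+1} if η_{i-l+1} < k and σ_i = η_{i-l+1} + l - 1 if η_{i-l+1} > k. Then σ is a permutation in S_n that avoids τ. -/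
open Filter

/-!
Collapsing the increasing block of `σ` back to the single entry `k` maps positions of `σ`
monotonically onto positions of `η`, and entries in different blocks compare in `σ` as their
images compare in `η`. An occurrence of `τ` in `σ` therefore collapses to an occurrence of `τ`
in `η` unless two of its entries fall into the block. In that case two adjacent entries `j, j + 1`
of the occurrence lie in the block and form an ascent of `τ`; since `τ` has no tight `12`, some
entry of `τ` has a value strictly between theirs, and its image in `σ` must lie in the block,
between the positions of `j` and `j + 1`, which is impossible.
-/

open Function

theorem exists_between_of_not_containsTightly12 {m : ℕ} {τ : Equiv.Perm (Fin m)}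
    (hτ : ¬ ContainsTightly12 τ) {i j : Fin m} (hij : (j : ℕ) = i + 1) (h : τ i < τ j) :
    ∃ q, τ i < τ q ∧ τ q < τ j := by
  have hne : (τ j : ℕ) ≠ τ i + 1 := fun h' => hτ ⟨i, j, hij, h'⟩
  have hlt : (τ i : ℕ) + 1 < m := by have := (τ j).isLt; rw [Fin.lt_def] at h; omega
  refine ⟨τ.symm ⟨τ i + 1, hlt⟩, ?_, ?_⟩ <;> simp only [Equiv.apply_symm_apply, Fin.lt_def] <;>
    omega

section Inflation

variable {n N m : ℕ} {σ : Fin n → Fin n} {η : Fin N → Fin N} {c : Fin n → Fin N}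

/-- `c i` is the entry of `η` that position `i` of `σ` comes from. -/
structure IsIncreasingInflation (σ : Fin n → Fin n) (η : Fin N → Fin N) (c : Fin n → Fin N) :
    Prop where
  monotone : Monotone c
  lt_of_lt : ∀ i j, η (c i) < η (c j) → σ i < σ j
  lt_of_eq : ∀ i j, c i = c j → i < j → σ i < σ j

namespace IsIncreasingInflation

theorem lt_iff_of_eq (hσ : IsIncreasingInflation σ η c) {i j : Fin n} (hc : c i = c j) :
    σ i < σ j ↔ i < j := by
  refine ⟨fun h => ?_, hσ.lt_of_eq i j hc⟩
  by_contra! hji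
  rcases hji.lt_or_eq with hji | rfl
  · exact (hσ.lt_of_eq j i hc.symm hji).asymm h
  · exact lt_irrefl _ h

theorem lt_iff_of_ne (hσ : IsIncreasingInflation σ η c) (hη : Injective η) {i j : Fin n}
    (hc : c i ≠ c j) : σ i < σ j ↔ η (c i) < η (c j) := by
  refine ⟨fun h => ?_, hσ.lt_of_lt i j⟩
  rcases lt_or_gt_of_ne (hη.ne hc) with hlt | hgt
  · exact hlt
  · exact absurd (hσ.lt_of_lt j i hgt) h.asymm

theorem injective (hσ : IsIncreasingInflation σ η c) (hη : Injective η) : Injective σ := by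
  intro i j h
  by_contra hne
  by_cases hc : c i = c j
  · rcases lt_or_gt_of_ne hne with hij | hji
    · exact (hσ.lt_of_eq i j hc hij).ne h
    · exact (hσ.lt_of_eq j i hc.symm hji).ne' h
  · rcases lt_or_gt_of_ne (hη.ne hc) with hlt | hgt
    · exact (hσ.lt_of_lt i j hlt).ne h
    · exact (hσ.lt_of_lt j i hgt).ne' h

theorem eq_of_lt_of_lt (hσ : IsIncreasingInflation σ η c) (hη : Injective η) {i i' x : Fin n}
    (hc : c i = c i') (h₁ : σ i < σ x) (h₂ : σ x < σ i') : c x = c i := by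
  by_contra hne
  rcases lt_or_gt_of_ne (hη.ne hne) with hlt | hgt
  · exact (hσ.lt_of_lt x i hlt).asymm h₁
  · rw [hc] at hgt
    exact (hσ.lt_of_lt i' x hgt).asymm h₂

theorem injective_comp_of_pattern (hσ : IsIncreasingInflation σ η c) (hη : Injective η)
    {τ : Equiv.Perm (Fin m)} (hτ : ¬ ContainsTightly12 τ) {f : Fin m → Fin n} (hf : StrictMono f)
    (hpat : ∀ j j', σ (f j) < σ (f j') ↔ τ j < τ j') : Injective (c ∘ f) := by
  suffices h : ∀ j j', j < j' → c (f j) ≠ c (f j') by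
    intro j j' hc
    by_contra hne
    rcases lt_or_gt_of_ne hne with hjj' | hj'j
    · exact h j j' hjj' hc
    · exact h j' j hj'j hc.symm
  intro j j' hjj' hc
  have hj : (j : ℕ) + 1 < m := by have := j'.isLt; rw [Fin.lt_def] at hjj'; omega
  obtain ⟨p, hp⟩ : ∃ p : Fin m, (p : ℕ) = j + 1 := ⟨⟨j + 1, hj⟩, rfl⟩
  have hjp : j < p := Fin.lt_def.2 (by omega)
  have hpj' : p ≤ j' := Fin.le_def.2 (by rw [Fin.lt_def] at hjj'; omega)
  have hcp : c (f j) = c (f p) :=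
    le_antisymm (hσ.monotone (hf hjp).le) (hc ▸ hσ.monotone (hf.monotone hpj'))
  obtain ⟨q, hjq, hqp⟩ :=
    exists_between_of_not_containsTightly12 hτ hp ((hpat j p).1 (hσ.lt_of_eq _ _ hcp (hf hjp)))
  have hcq : c (f q) = c (f j) := hσ.eq_of_lt_of_lt hη hcp ((hpat j q).2 hjq) ((hpat q p).2 hqp)
  have hjq' : j < q := hf.lt_iff_lt.1 ((hσ.lt_iff_of_eq hcq.symm).1 ((hpat j q).2 hjq))
  have hqp' : q < p := hf.lt_iff_lt.1 ((hσ.lt_iff_of_eq (hcq.trans hcp)).1 ((hpat q p).2 hqp))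
  rw [Fin.lt_def] at hjq' hqp'
  omega

theorem avoids (hσ : IsIncreasingInflation σ η c) (hη : Injective η) {τ : Equiv.Perm (Fin m)}
    (hτ : ¬ ContainsTightly12 τ) (hητ : Avoids η τ) : Avoids σ τ := by
  rintro ⟨f, hf, hpat⟩
  have hinj := hσ.injective_comp_of_pattern hη hτ hf hpat
  refine hητ ⟨c ∘ f, (hσ.monotone.comp hf.monotone).strictMono_of_injective hinj, fun j j' => ?_⟩
  rcases eq_or_ne j j' with rfl | hne
  · simp
  · rw [← hpat, hσ.lt_iff_of_ne hη (hinj.ne hne), comp_apply, comp_apply]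

end IsIncreasingInflation

end Inflation

def collapseBlock {n : ℕ} (l : ℕ) (a : Fin (n - l + 1)) (i : Fin n) : Fin (n - l + 1) :=
  ⟨if (i : ℕ) < a then i else if (i : ℕ) < a + l then a else i + 1 - l, by
    have := a.isLt; have := i.isLt; split_ifs <;> omega⟩

section CollapseBlock

variable {n l : ℕ} {a : Fin (n - l + 1)} {i j : Fin n}

theorem monotone_collapseBlock : Monotone (collapseBlock l a) := by
  intro i j hij
  simp only [collapseBlock, Fin.le_def] at hij ⊢
  split_ifs <;> omega

theorem collapseBlock_eq_iff : collapseBlock l a i = a ↔ (a : ℕ) ≤ i ∧ (i : ℕ) < a + l := by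
  simp only [collapseBlock, Fin.ext_iff]
  split_ifs <;> omega

theorem collapseBlock_eq_of_ne (h : collapseBlock l a i = collapseBlock l a j) (hij : i ≠ j) :
    collapseBlock l a i = a := by
  simp only [collapseBlock, Fin.ext_iff, ne_eq] at h hij ⊢
  split_ifs at h ⊢ <;> omega

theorem collapseBlock_of_lt (h : (i : ℕ) < a) :
    collapseBlock l a i = ⟨i, h.trans a.isLt⟩ := by
  simp [collapseBlock, h]

theorem collapseBlock_of_add_le (h : (a : ℕ) + l ≤ i) :
    collapseBlock l a i = ⟨i + 1 - l, by have := i.isLt; omega⟩ := by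
  simp only [collapseBlock, Fin.ext_iff]
  split_ifs <;> omega

end CollapseBlock

theorem isIncreasingInflation_collapseBlock {n l : ℕ} {η : Equiv.Perm (Fin (n - l + 1))}
    {a k : Fin (n - l + 1)} (hak : η a = k) {σ : Fin n → Fin n}
    (hσ : ∀ i, (σ i : ℕ) =
      if collapseBlock l a i = a then (k : ℕ) + ((i : ℕ) - a)
      else if (η (collapseBlock l a i) : ℕ) < k then (η (collapseBlock l a i) : ℕ)
      else (η (collapseBlock l a i) : ℕ) + l - 1) :
    IsIncreasingInflation σ η (collapseBlock l a) := by
  have hband : ∀ i, ((η (collapseBlock l a i) : ℕ) = k ∧ (k : ℕ) ≤ σ i ∧ (σ i : ℕ) < k + l) ∨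
      ((η (collapseBlock l a i) : ℕ) < k ∧ (σ i : ℕ) = η (collapseBlock l a i)) ∨
      ((k : ℕ) < η (collapseBlock l a i) ∧ (σ i : ℕ) = η (collapseBlock l a i) + l - 1) := by
    intro i
    by_cases hci : collapseBlock l a i = a
    · have := collapseBlock_eq_iff.1 hci
      rw [hσ i, if_pos hci, hci, hak]
      omega
    · have hk : (η (collapseBlock l a i) : ℕ) ≠ k := fun h =>
        hci (η.injective (Fin.ext (h.trans (congrArg Fin.val hak).symm)))
      rw [hσ i, if_neg hci]
      split_ifs <;> omega
  refine ⟨monotone_collapseBlock, fun i j h => ?_, fun i j hc hij => ?_⟩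
  · rw [Fin.lt_def] at h ⊢
    rcases hband i with hi | hi | hi <;> rcases hband j with hj | hj | hj <;> omega
  · have hci := collapseBlock_eq_of_ne hc hij.ne
    have hcj := hc ▸ hci
    have := collapseBlock_eq_iff.1 hci
    have := collapseBlock_eq_iff.1 hcj
    rw [Fin.lt_def] at hij ⊢
    rw [hσ i, hσ j, if_pos hci, if_pos hcj]
    omega

/-- inserting the block `k, k+1, …, k+l-1` in increasing order at the position
of the value `k` of a `τ`-avoiding permutation `η` yields a `τ`-avoiding permutation of `[n]`,
provided `τ` does not contain 12 tightly. (Zero-based indexing.) -/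
theorem expansion_increasing_avoids (m : ℕ) (τ : Equiv.Perm (Fin m))
    (hτ : ¬ ContainsTightly12 τ)
    (l n : ℕ)
    (η : Equiv.Perm (Fin (n - l + 1))) (hη : Avoids ⇑η ⇑τ)
    (a k : Fin (n - l + 1)) (hak : η a = k)
    (σ : Fin n → Fin n)
    (hσ : ∀ i : Fin n, (σ i : ℕ) =
      if hia : (i : ℕ) < (a : ℕ) then
        (if (η ⟨(i : ℕ), lt_trans hia a.isLt⟩ : ℕ) < (k : ℕ) then
          (η ⟨(i : ℕ), lt_trans hia a.isLt⟩ : ℕ)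
        else (η ⟨(i : ℕ), lt_trans hia a.isLt⟩ : ℕ) + l - 1)
      else if (i : ℕ) < (a : ℕ) + l then (k : ℕ) + ((i : ℕ) - (a : ℕ))
      else
        (if (η ⟨(i : ℕ) + 1 - l, by have := i.isLt; omega⟩ : ℕ) < (k : ℕ) then
          (η ⟨(i : ℕ) + 1 - l, by have := i.isLt; omega⟩ : ℕ)
        else (η ⟨(i : ℕ) + 1 - l, by have := i.isLt; omega⟩ : ℕ) + l - 1)) :
    Function.Bijective σ ∧ Avoids σ ⇑τ := by
  have hinfl : IsIncreasingInflation σ η (collapseBlock l a) := by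
    refine isIncreasingInflation_collapseBlock hak fun i => ?_
    rw [hσ i]
    by_cases h₁ : (i : ℕ) < a
    · rw [dif_pos h₁, if_neg (mt collapseBlock_eq_iff.1 (by omega)), collapseBlock_of_lt h₁]
    · by_cases h₂ : (i : ℕ) < a + l
      · rw [dif_neg h₁, if_pos h₂, if_pos (collapseBlock_eq_iff.2 ⟨by omega, h₂⟩)]
      · rw [dif_neg h₁, if_neg h₂, if_neg (mt collapseBlock_eq_iff.1 (by omega)),
          collapseBlock_of_add_le (by omega)]
  exact ⟨Finite.injective_iff_bijective.1 (hinfl.injective η.injective),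
    hinfl.avoids η.injective hτ hη⟩
end
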